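/- arXiv:1710.04870 — 10 statements merged into one kernel-verified Lean document; each statement's English description precedes it below -/
import Mathlib

section
/- Let n ∈ ℕ, let b ∈ ℕ with b > n/2, and let ℓ ∈ ℕ. Then there exists a constant C > 0, independent of t, such that ‖m¹_{b,ℓ,H}(·,t)‖₂ ≤ C t^{b} e^{−t/2} for all t ≥ 1. -/
open MeasureTheory

/-- `f(r,c,t) = cos(t·√(r²−c))`. -/
noncomputable def fDW (r c t : ℝ) : ℝ := Real.cos (t * Real.sqrt (r ^ 2 - c))

/-- `g(r,a,t) = exp(−2tr²/(1+√(1−4ar²)))`. -/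
noncomputable def gDW (r a t : ℝ) : ℝ :=
  Real.exp (-(2 * t * r ^ 2) / (1 + Real.sqrt (1 - 4 * a * r ^ 2)))

/-- `h(r,a,t) = (1−4ar²)^{−1/2}·exp(−2tr²/(1+√(1−4ar²)))`. -/
noncomputable def hDW (r a t : ℝ) : ℝ :=
  (Real.sqrt (1 - 4 * a * r ^ 2))⁻¹ *
    Real.exp (-(2 * t * r ^ 2) / (1 + Real.sqrt (1 - 4 * a * r ^ 2)))

/-- `W¹_b(ξ,t) = Σ_{k=0}^{b−1} (1/4)^k (1/k!) ∂_c^k f(|ξ|,0,t)` (as a function of `r = |ξ|`). -/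
noncomputable def W1 (b : ℕ) (r t : ℝ) : ℝ :=
  ∑ k ∈ Finset.range b,
    (1/4 : ℝ) ^ k * (1 / (Nat.factorial k) : ℝ) * iteratedDeriv k (fun c => fDW r c t) 0

/-- `W²_b(ξ,t) = 2t⁻¹ Σ_{k=0}^{b−2} (1/4)^k (1/k!) ∂_c^{k+1} f(|ξ|,0,t)` for `b ≥ 2`,
and `W²_1 = 0` (the empty sum). -/
noncomputable def W2 (b : ℕ) (r t : ℝ) : ℝ :=
  2 * t⁻¹ * ∑ k ∈ Finset.range (b - 1),
    (1/4 : ℝ) ^ k * (1 / (Nat.factorial k) : ℝ) * iteratedDeriv (k + 1) (fun c => fDW r c t) 0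

/-- `D¹_ℓ(ξ,t) = (1/2) Σ_{k=0}^{ℓ−1} (1/k!) ∂_a^k g(|ξ|,0,t)`. -/
noncomputable def D1 (l : ℕ) (r t : ℝ) : ℝ :=
  (1/2 : ℝ) * ∑ k ∈ Finset.range l,
    (1 / (Nat.factorial k) : ℝ) * iteratedDeriv k (fun a => gDW r a t) 0

/-- `D²_ℓ(ξ,t) = Σ_{k=0}^{ℓ−1} (1/k!) ∂_a^k h(|ξ|,0,t)`. -/
noncomputable def D2 (l : ℕ) (r t : ℝ) : ℝ :=
  ∑ k ∈ Finset.range l,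
    (1 / (Nat.factorial k) : ℝ) * iteratedDeriv k (fun a => hDW r a t) 0

/-- The Fourier multiplier `K₀(t,ξ)` of the damped wave evolution (as a function of `r = |ξ|`). -/
noncomputable def K0 (t r : ℝ) : ℝ :=
  if r ≤ 1/2 then Real.exp (-t/2) * Real.cosh (t * Real.sqrt (1/4 - r ^ 2))
  else Real.exp (-t/2) * Real.cos (t * Real.sqrt (r ^ 2 - 1/4))

/-- The Fourier multiplier `K₁(t,ξ)` of the damped wave evolution (as a function of `r = |ξ|`). -/
noncomputable def K1 (t r : ℝ) : ℝ :=
  if r < 1/2 then Real.exp (-t/2) * Real.sinh (t * Real.sqrt (1/4 - r ^ 2)) / Real.sqrt (1/4 - r ^ 2)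
  else if r = 1/2 then t * Real.exp (-t/2)
  else Real.exp (-t/2) * Real.sin (t * Real.sqrt (r ^ 2 - 1/4)) / Real.sqrt (r ^ 2 - 1/4)

open Real in
open Real

/-! ### list helpers -/

lemma list_sum_map_add {α : Type*} (L : List α) (f g : α → ℝ) :
    (L.map (fun a => f a + g a)).sum = (L.map f).sum + (L.map g).sum := by
  induction L with
  | nil => simp
  | cons a l ih => simp [ih]; ring

lemma list_sum_map_mul_right {α : Type*} (L : List α) (f : α → ℝ) (c : ℝ) :
    (L.map (fun a => f a * c)).sum = (L.map f).sum * c := by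
  induction L with
  | nil => simp
  | cons a l ih => simp [ih]; ring

lemma hasDerivAt_list_sum {α : Type*} (L : List α) (F : α → ℝ → ℝ) (F' : α → ℝ) (x : ℝ)
    (h : ∀ a ∈ L, HasDerivAt (F a) (F' a) x) :
    HasDerivAt (fun y => (L.map (fun a => F a y)).sum) ((L.map F').sum) x := by
  induction L with
  | nil => simpa using hasDerivAt_const x (0:ℝ)
  | cons a l ih =>
    simp only [List.map_cons, List.sum_cons]
    exact (h a (by simp)).add (ih fun b hb => h b (List.mem_cons_of_mem a hb))

lemma abs_list_sum_le {α : Type*} (L : List α) (F G : α → ℝ)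
    (h : ∀ a ∈ L, |F a| ≤ G a) : |(L.map F).sum| ≤ (L.map G).sum := by
  induction L with
  | nil => simp
  | cons a l ih =>
    simp only [List.map_cons, List.sum_cons]
    exact (abs_add_le _ _).trans
      (add_le_add (h a (by simp)) (ih fun b hb => h b (List.mem_cons_of_mem a hb)))

lemma hasDerivAt_inv_pow' {f : ℝ → ℝ} {f' x : ℝ} (hf : HasDerivAt f f' x) (hfx : f x ≠ 0)
    (p : ℕ) :
    HasDerivAt (fun y => ((f y)⁻¹) ^ p) (-(p : ℝ) * ((f x)⁻¹) ^ (p + 1) * f') x := by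
  have h := (hf.pow p).inv (pow_ne_zero p hfx)
  have heq : (fun y => ((f y)⁻¹) ^ p) = fun y => ((f y) ^ p)⁻¹ := by
    funext y; rw [inv_pow]
  rw [heq]
  refine h.congr_deriv ?_
  simp only [Pi.pow_apply]
  cases p with
  | zero => simp
  | succ q =>
    simp only [Nat.add_sub_cancel]
    rw [inv_pow]
    field_simp
    ring
/-- term: `c * t^j * ((√(r²-x))⁻¹^p * cos (t√(r²-x) + m·π/2))` -/
noncomputable def fTerm (r t x : ℝ) (q : ℝ × ℕ × ℕ × ℕ) : ℝ :=
  q.1 * t ^ q.2.1 *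
    (((Real.sqrt (r ^ 2 - x))⁻¹) ^ q.2.2.1 *
      Real.cos (t * Real.sqrt (r ^ 2 - x) + (q.2.2.2 : ℝ) * (Real.pi / 2)))

noncomputable def fChild1 (q : ℝ × ℕ × ℕ × ℕ) : ℝ × ℕ × ℕ × ℕ :=
  (-q.1 / 2, q.2.1 + 1, q.2.2.1 + 1, q.2.2.2 + 1)

noncomputable def fChild2 (q : ℝ × ℕ × ℕ × ℕ) : ℝ × ℕ × ℕ × ℕ :=
  (q.1 * q.2.2.1 / 2, q.2.1, q.2.2.1 + 2, q.2.2.2)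

lemma fTerm_hasDerivAt (r t x : ℝ) (hx : x < r ^ 2) (q : ℝ × ℕ × ℕ × ℕ) :
    HasDerivAt (fun y => fTerm r t y q)
      (fTerm r t x (fChild1 q) + fTerm r t x (fChild2 q)) x := by
  obtain ⟨c, j, p, m⟩ := q
  have hu : 0 < r ^ 2 - x := by linarith
  set s := Real.sqrt (r ^ 2 - x) with hs
  have hs0 : 0 < s := Real.sqrt_pos.mpr hu
  have hS : HasDerivAt (fun y => Real.sqrt (r ^ 2 - y)) (1 / (2 * s) * (-1)) x := by
    have hinner : HasDerivAt (fun y : ℝ => r ^ 2 - y) (-1) x := by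
      simpa [Pi.sub_def] using (hasDerivAt_const x (r ^ 2)).sub (hasDerivAt_id x)
    exact (Real.hasDerivAt_sqrt hu.ne').comp x hinner
  have hA : HasDerivAt (fun y => ((Real.sqrt (r ^ 2 - y))⁻¹) ^ p)
      (-(p : ℝ) * (s⁻¹) ^ (p + 1) * (1 / (2 * s) * (-1))) x :=
    hasDerivAt_inv_pow' hS hs0.ne' p
  have hB : HasDerivAt (fun y => Real.cos (t * Real.sqrt (r ^ 2 - y) + (m : ℝ) * (Real.pi / 2)))
      (-Real.sin (t * s + (m : ℝ) * (Real.pi / 2)) * (t * (1 / (2 * s) * (-1)))) x := by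
    have hinner : HasDerivAt (fun y => t * Real.sqrt (r ^ 2 - y) + (m : ℝ) * (Real.pi / 2))
        (t * (1 / (2 * s) * (-1))) x := by
      simpa using ((hS.const_mul t).add_const ((m : ℝ) * (Real.pi / 2)))
    simpa [Function.comp_def] using (Real.hasDerivAt_cos (t * s + (m : ℝ) * (Real.pi / 2))).comp x hinner
  have h := ((hA.mul hB).const_mul (c * t ^ j))
  have hfun : (fun y => c * t ^ j * (((Real.sqrt (r ^ 2 - y))⁻¹) ^ p *
      Real.cos (t * Real.sqrt (r ^ 2 - y) + (m : ℝ) * (Real.pi / 2)))) =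
      fun y => fTerm r t y (c, j, p, m) := rfl
  replace h : HasDerivAt (fun y => fTerm r t y (c, j, p, m)) _ x := h
  convert h using 1
  simp only [fTerm, fChild1, fChild2]
  have hcos : Real.cos (t * s + ((m + 1 : ℕ) : ℝ) * (Real.pi / 2)) =
      -Real.sin (t * s + (m : ℝ) * (Real.pi / 2)) := by
    have : t * s + ((m + 1 : ℕ) : ℝ) * (Real.pi / 2) =
        (t * s + (m : ℝ) * (Real.pi / 2)) + Real.pi / 2 := by push_cast; ring
    rw [this, Real.cos_add_pi_div_two]
  rw [hcos]
  push_cast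
  simp only [← hs]
  have hsne : s ≠ 0 := hs0.ne'
  clear_value s
  simp only [inv_pow]
  field_simp
  ring

lemma fDW_iteratedDeriv (k : ℕ) : ∃ L : List (ℝ × ℕ × ℕ × ℕ),
    (∀ q ∈ L, q.2.1 ≤ k ∧ k ≤ q.2.2.1) ∧
    ∀ r t x : ℝ, x < r ^ 2 →
      iteratedDeriv k (fun c => fDW r c t) x = (L.map (fTerm r t x)).sum := by
  induction k with
  | zero =>
    refine ⟨[(1, 0, 0, 0)], by simp, ?_⟩
    intro r t x hx
    simp [fTerm, fDW, iteratedDeriv_zero]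
  | succ k ih =>
    obtain ⟨L, hL, hform⟩ := ih
    refine ⟨L.map fChild1 ++ L.map fChild2, ?_, ?_⟩
    · intro q hq
      rcases List.mem_append.mp hq with hq | hq <;>
        obtain ⟨q', hq', rfl⟩ := List.mem_map.mp hq
      · have := hL q' hq'
        simp only [fChild1]
        omega
      · have := hL q' hq'
        simp only [fChild2]
        omega
    · intro r t x hx
      rw [iteratedDeriv_succ]
      have hev : iteratedDeriv k (fun c => fDW r c t) =ᶠ[nhds x]
          (fun y => (L.map (fTerm r t y)).sum) := by
        filter_upwards [isOpen_Iio.mem_nhds (show x ∈ Set.Iio (r ^ 2) from hx)] with y hy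
        exact hform r t y hy
      rw [hev.deriv_eq]
      have hsum : HasDerivAt (fun y => (L.map (fTerm r t y)).sum)
          ((L.map (fun q => fTerm r t x (fChild1 q) + fTerm r t x (fChild2 q))).sum) x :=
        hasDerivAt_list_sum L _ _ x (fun q _ => fTerm_hasDerivAt r t x hx q)
      rw [hsum.deriv]
      rw [list_sum_map_add]
      rw [List.map_append, List.sum_append, List.map_map, List.map_map]
      rfl

lemma fDW_deriv_bound (b : ℕ) : ∃ M : ℝ, 0 < M ∧ ∀ r t x : ℝ, 1 ≤ r → 1 ≤ t → 0 ≤ x → x ≤ 1/4 →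
    |iteratedDeriv b (fun c => fDW r c t) x| ≤ M * (t ^ b * (r⁻¹) ^ b) := by
  obtain ⟨L, hL, hform⟩ := fDW_iteratedDeriv b
  refine ⟨(L.map (fun q => |q.1| * 2 ^ q.2.2.1)).sum + 1, ?_, ?_⟩
  · have : 0 ≤ (L.map (fun q => |q.1| * 2 ^ q.2.2.1)).sum := by
      apply List.sum_nonneg
      intro a ha
      obtain ⟨q, hq, rfl⟩ := List.mem_map.mp ha
      positivity
    linarith
  · intro r t x hr ht hx0 hx1
    have hr0 : (0:ℝ) < r := lt_of_lt_of_le one_pos hr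
    have hx : x < r ^ 2 := by nlinarith
    rw [hform r t x hx]
    have hbase : (0:ℝ) ≤ t ^ b * (r⁻¹) ^ b := by positivity
    calc |(L.map (fTerm r t x)).sum|
        ≤ (L.map (fun q => |q.1| * 2 ^ q.2.2.1 * (t ^ b * (r⁻¹) ^ b))).sum := by
          apply abs_list_sum_le
          intro q hq
          obtain ⟨hj, hp⟩ := hL q hq
          obtain ⟨c, j, p, m⟩ := q
          simp only at hj hp
          have hs2 : r / 2 ≤ Real.sqrt (r ^ 2 - x) := by
            have h1 : (r / 2) ^ 2 ≤ r ^ 2 - x := by nlinarith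
            calc r / 2 = Real.sqrt ((r / 2) ^ 2) := (Real.sqrt_sq (by positivity)).symm
              _ ≤ Real.sqrt (r ^ 2 - x) := Real.sqrt_le_sqrt h1
          have hsi : (Real.sqrt (r ^ 2 - x))⁻¹ ≤ 2 * r⁻¹ := by
            have h2 : 2 * r⁻¹ = (r / 2)⁻¹ := by
              field_simp
            rw [h2]
            exact inv_anti₀ (by positivity) hs2
          have habs : |fTerm r t x (c, j, p, m)| ≤ |c| * t ^ j * ((2 * r⁻¹) ^ p) := by
            simp only [fTerm, abs_mul]
            have h1 : |t ^ j| = t ^ j := abs_of_nonneg (by positivity)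
            have h2 : |((Real.sqrt (r ^ 2 - x))⁻¹) ^ p| ≤ (2 * r⁻¹) ^ p := by
              rw [abs_of_nonneg (by positivity)]
              exact pow_le_pow_left₀ (by positivity) hsi p
            have h3 : |Real.cos (t * Real.sqrt (r ^ 2 - x) + (m : ℝ) * (Real.pi / 2))| ≤ 1 :=
              Real.abs_cos_le_one _
            rw [h1]
            calc |c| * t ^ j * (|((Real.sqrt (r ^ 2 - x))⁻¹) ^ p| *
                |Real.cos (t * Real.sqrt (r ^ 2 - x) + (m : ℝ) * (Real.pi / 2))|)
                ≤ |c| * t ^ j * ((2 * r⁻¹) ^ p * 1) := by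
                  gcongr <;> first | exact abs_nonneg _ | exact h2 | exact h3 | skip
              _ = |c| * t ^ j * ((2 * r⁻¹) ^ p) := by ring
          refine habs.trans ?_
          have htj : t ^ j ≤ t ^ b := pow_le_pow_right₀ ht hj
          have hrp : (r⁻¹) ^ p ≤ (r⁻¹) ^ b := by
            apply pow_le_pow_of_le_one (by positivity) ?_ hp
            rw [inv_le_one_iff₀]; right; exact hr
          calc |c| * t ^ j * ((2 * r⁻¹) ^ p)
              = |c| * 2 ^ p * (t ^ j * (r⁻¹) ^ p) := by rw [mul_pow]; ring
            _ ≤ |c| * 2 ^ p * (t ^ b * (r⁻¹) ^ b) := by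
                gcongr <;> first | exact le_trans (by positivity) htj | exact htj | exact hrp | skip
      _ = (L.map (fun q => |q.1| * 2 ^ q.2.2.1)).sum * (t ^ b * (r⁻¹) ^ b) :=
          list_sum_map_mul_right L _ _
      _ ≤ ((L.map (fun q => |q.1| * 2 ^ q.2.2.1)).sum + 1) * (t ^ b * (r⁻¹) ^ b) := by
          apply mul_le_mul_of_nonneg_right _ hbase
          linarith

lemma fDW_iteratedDeriv_differentiableAt (k : ℕ) (r t x : ℝ) (hx : x < r ^ 2) :
    DifferentiableAt ℝ (iteratedDeriv k (fun c => fDW r c t)) x := by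
  obtain ⟨L, _, hform⟩ := fDW_iteratedDeriv k
  have hev : iteratedDeriv k (fun c => fDW r c t) =ᶠ[nhds x]
      (fun y => (L.map (fTerm r t y)).sum) := by
    filter_upwards [isOpen_Iio.mem_nhds (show x ∈ Set.Iio (r ^ 2) from hx)] with y hy
    exact hform r t y hy
  rw [hev.differentiableAt_iff]
  exact (hasDerivAt_list_sum L _ _ x (fun q _ => fTerm_hasDerivAt r t x hx q)).differentiableAt

lemma fDW_contDiffOn (r t : ℝ) (N : ℕ) :
    ContDiffOn ℝ N (fun c => fDW r c t) (Set.Iio (r ^ 2)) := by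
  intro x hx
  have hx' : (0:ℝ) < r ^ 2 - x := by simp only [Set.mem_Iio] at hx; linarith
  have h1 : ContDiffAt ℝ N (fun c : ℝ => r ^ 2 - c) x := by
    exact (contDiff_const.sub contDiff_id).contDiffAt
  have h2 : ContDiffAt ℝ N (fun c : ℝ => Real.sqrt (r ^ 2 - c)) x :=
    (Real.contDiffAt_sqrt hx'.ne').comp x h1
  have h3 : ContDiffAt ℝ N (fun c : ℝ => t * Real.sqrt (r ^ 2 - c)) x :=
    contDiffAt_const.mul h2
  exact (Real.contDiff_cos.contDiffAt.comp x h3).contDiffWithinAt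

lemma fDW_within_eq (r t : ℝ) (hr : 1 ≤ r) (k : ℕ) :
    Set.EqOn (iteratedDerivWithin k (fun c => fDW r c t) (Set.Icc 0 (1/4 : ℝ)))
      (iteratedDeriv k (fun c => fDW r c t)) (Set.Icc 0 (1/4 : ℝ)) := by
  induction k with
  | zero => intro x hx; simp [iteratedDerivWithin_zero, iteratedDeriv_zero]
  | succ k ih =>
    intro x hx
    have hud : UniqueDiffWithinAt ℝ (Set.Icc (0:ℝ) (1/4)) x :=
      (uniqueDiffOn_Icc (by norm_num)) x hx
    rw [iteratedDerivWithin_succ, iteratedDeriv_succ]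
    rw [derivWithin_congr ih (ih hx)]
    refine DifferentiableAt.derivWithin ?_ hud
    apply fDW_iteratedDeriv_differentiableAt
    obtain ⟨hx0, hx1⟩ := hx
    nlinarith

/-- Main Taylor-remainder bound for the `W1` part. -/
lemma fDW_taylor_bound (b : ℕ) (hb1 : 1 ≤ b) : ∃ M : ℝ, 0 < M ∧ ∀ r t : ℝ, 1 ≤ r → 1 ≤ t →
    |Real.cos (t * Real.sqrt (r ^ 2 - 1/4)) -
      ∑ k ∈ Finset.range b, (1/4 : ℝ) ^ k * (1 / (Nat.factorial k) : ℝ) *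
        iteratedDeriv k (fun c => fDW r c t) 0|
      ≤ M * (t ^ b * (r⁻¹) ^ b) := by
  obtain ⟨M, hM, hbound⟩ := fDW_deriv_bound b
  refine ⟨M, hM, ?_⟩
  intro r t hr ht
  have hr0 : (0:ℝ) < r := lt_of_lt_of_le one_pos hr
  have hsub : Set.Icc (0:ℝ) (1/4) ⊆ Set.Iio (r ^ 2) := by
    intro y hy
    simp only [Set.mem_Iio]
    obtain ⟨_, hy1⟩ := hy
    nlinarith
  have hcd : ContDiffOn ℝ (b - 1 : ℕ) (fun c => fDW r c t) (Set.Icc 0 (1/4 : ℝ)) :=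
    (fDW_contDiffOn r t (b-1)).mono hsub
  have hdiff : DifferentiableOn ℝ
      (iteratedDerivWithin (b - 1) (fun c => fDW r c t) (Set.Icc 0 (1/4 : ℝ)))
      (Set.Ioo (0:ℝ) (1/4)) := by
    intro y hy
    have hy' : y ∈ Set.Icc (0:ℝ) (1/4) := Set.Ioo_subset_Icc_self hy
    have hd : DifferentiableAt ℝ (iteratedDeriv (b-1) (fun c => fDW r c t)) y :=
      fDW_iteratedDeriv_differentiableAt (b-1) r t y (hsub hy')
    exact (hd.differentiableWithinAt).congr
      (fun z hz => fDW_within_eq r t hr (b-1) (Set.Ioo_subset_Icc_self hz))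
      (fDW_within_eq r t hr (b-1) hy')
  obtain ⟨x', hx', heq⟩ := taylor_mean_remainder_lagrange (by norm_num : (0:ℝ) ≠ 1/4)
    (by rw [Set.uIcc_of_le (by norm_num)]; exact hcd)
    (by rw [Set.uIcc_of_le (by norm_num), Set.uIoo_of_le (by norm_num)]; exact hdiff)
  rw [Set.uIcc_of_le (by norm_num : (0:ℝ) ≤ 1/4)] at heq
  rw [Set.uIoo_of_le (by norm_num : (0:ℝ) ≤ 1/4)] at hx'
  have hb' : b - 1 + 1 = b := Nat.succ_pred_eq_of_pos hb1
  have htay : taylorWithinEval (fun c => fDW r c t) (b-1) (Set.Icc 0 (1/4 : ℝ)) 0 (1/4) =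
      ∑ k ∈ Finset.range b, (1/4 : ℝ) ^ k * (1 / (Nat.factorial k) : ℝ) *
        iteratedDeriv k (fun c => fDW r c t) 0 := by
    rw [taylor_within_apply, hb']
    apply Finset.sum_congr rfl
    intro k _
    rw [fDW_within_eq r t hr k (by norm_num : (0:ℝ) ∈ Set.Icc (0:ℝ) (1/4))]
    simp only [smul_eq_mul, sub_zero]
    ring
  have hfd : fDW r (1/4) t = Real.cos (t * Real.sqrt (r ^ 2 - 1/4)) := rfl
  rw [htay, hb'] at heq
  rw [← hfd, heq]
  have hx'' : x' ∈ Set.Icc (0:ℝ) (1/4) := Set.Ioo_subset_Icc_self hx'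
  rw [fDW_within_eq r t hr b hx'']
  obtain ⟨hx0, hx1⟩ := hx''
  have h1 : |iteratedDeriv b (fun c => fDW r c t) x'| ≤ M * (t ^ b * (r⁻¹) ^ b) :=
    hbound r t x' hr ht hx0 hx1
  have h2 : |((1:ℝ)/4 - 0) ^ b / (Nat.factorial b)| ≤ 1 := by
    rw [abs_div, abs_of_nonneg (by positivity : (0:ℝ) ≤ ((1:ℝ)/4 - 0) ^ b)]
    rw [abs_of_nonneg (by positivity : (0:ℝ) ≤ ((Nat.factorial b : ℝ)))]
    rw [div_le_one (by positivity)]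
    calc ((1:ℝ)/4 - 0) ^ b ≤ 1 := by
          rw [sub_zero]
          exact pow_le_one₀ (by norm_num) (by norm_num)
      _ ≤ (Nat.factorial b : ℝ) := by
          exact_mod_cast Nat.one_le_iff_ne_zero.mpr (Nat.factorial_ne_zero b)
  calc |iteratedDeriv b (fun c => fDW r c t) x' * ((1:ℝ)/4 - 0) ^ b / (Nat.factorial b)|
      = |iteratedDeriv b (fun c => fDW r c t) x'| * |((1:ℝ)/4 - 0) ^ b / (Nat.factorial b)| := by
        rw [mul_div_assoc, abs_mul]
    _ ≤ (M * (t ^ b * (r⁻¹) ^ b)) * 1 := by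
        apply mul_le_mul h1 h2 (abs_nonneg _) (by positivity)
    _ = M * (t ^ b * (r⁻¹) ^ b) := by ring

/-- term: `c * t^j * r^e * ((√(1-4ar²))⁻¹^m * ((1+√(1-4ar²))⁻¹^p * gDW r a t))` -/
noncomputable def gTerm (r t a : ℝ) (q : ℝ × ℕ × ℕ × ℕ × ℕ) : ℝ :=
  q.1 * t ^ q.2.1 * r ^ q.2.2.1 *
    (((Real.sqrt (1 - 4 * a * r ^ 2))⁻¹) ^ q.2.2.2.1 *
      (((1 + Real.sqrt (1 - 4 * a * r ^ 2))⁻¹) ^ q.2.2.2.2 * gDW r a t))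

noncomputable def gChild1 (q : ℝ × ℕ × ℕ × ℕ × ℕ) : ℝ × ℕ × ℕ × ℕ × ℕ :=
  (2 * q.2.2.2.1 * q.1, q.2.1, q.2.2.1 + 2, q.2.2.2.1 + 2, q.2.2.2.2)

noncomputable def gChild2 (q : ℝ × ℕ × ℕ × ℕ × ℕ) : ℝ × ℕ × ℕ × ℕ × ℕ :=
  (2 * q.2.2.2.2 * q.1, q.2.1, q.2.2.1 + 2, q.2.2.2.1 + 1, q.2.2.2.2 + 1)

noncomputable def gChild3 (q : ℝ × ℕ × ℕ × ℕ × ℕ) : ℝ × ℕ × ℕ × ℕ × ℕ :=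
  (-4 * q.1, q.2.1 + 1, q.2.2.1 + 4, q.2.2.2.1 + 1, q.2.2.2.2 + 2)

lemma gTerm_hasDerivAt (r t a : ℝ) (ha : 0 < 1 - 4 * a * r ^ 2) (q : ℝ × ℕ × ℕ × ℕ × ℕ) :
    HasDerivAt (fun y => gTerm r t y q)
      (gTerm r t a (gChild1 q) + gTerm r t a (gChild2 q) + gTerm r t a (gChild3 q)) a := by
  obtain ⟨c, j, e, m, p⟩ := q
  set s := Real.sqrt (1 - 4 * a * r ^ 2) with hsdef
  have hs0 : 0 < s := Real.sqrt_pos.mpr ha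
  have hs1 : (0:ℝ) < 1 + s := by linarith
  have hS : HasDerivAt (fun y => Real.sqrt (1 - 4 * y * r ^ 2))
      (1 / (2 * s) * (-(4 * r ^ 2))) a := by
    have hinner : HasDerivAt (fun y : ℝ => 1 - 4 * y * r ^ 2) (-(4 * r ^ 2)) a := by
      simpa using ((hasDerivAt_id a).const_mul (4 : ℝ)|>.mul_const (r^2)).const_sub 1
    exact (Real.hasDerivAt_sqrt ha.ne').comp a hinner
  have hA : HasDerivAt (fun y => ((Real.sqrt (1 - 4 * y * r ^ 2))⁻¹) ^ m)
      (-(m : ℝ) * (s⁻¹) ^ (m + 1) * (1 / (2 * s) * (-(4 * r ^ 2)))) a :=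
    hasDerivAt_inv_pow' hS hs0.ne' m
  have hBinner : HasDerivAt (fun y => 1 + Real.sqrt (1 - 4 * y * r ^ 2))
      (1 / (2 * s) * (-(4 * r ^ 2))) a := by
    simpa using hS.const_add 1
  have hB : HasDerivAt (fun y => ((1 + Real.sqrt (1 - 4 * y * r ^ 2))⁻¹) ^ p)
      (-(p : ℝ) * ((1 + s)⁻¹) ^ (p + 1) * (1 / (2 * s) * (-(4 * r ^ 2)))) a :=
    hasDerivAt_inv_pow' hBinner hs1.ne' p
  have hw : HasDerivAt (fun y => -(2 * t * r ^ 2) / (1 + Real.sqrt (1 - 4 * y * r ^ 2)))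
      (-(2 * t * r ^ 2) * (-(1 / (2 * s) * (-(4 * r ^ 2))) / (1 + s) ^ 2)) a := by
    have hinv : HasDerivAt (fun y => ((1 + Real.sqrt (1 - 4 * y * r ^ 2)))⁻¹)
        (-(1 / (2 * s) * (-(4 * r ^ 2))) / (1 + s) ^ 2) a := hBinner.inv hs1.ne'
    have := hinv.const_mul (-(2 * t * r ^ 2))
    simpa [div_eq_mul_inv] using this
  have hG : HasDerivAt (fun y => gDW r y t)
      (Real.exp (-(2 * t * r ^ 2) / (1 + s)) *
        (-(2 * t * r ^ 2) * (-(1 / (2 * s) * (-(4 * r ^ 2))) / (1 + s) ^ 2))) a := by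
    have := hw.exp
    simpa [gDW] using this
  have h := ((hA.mul (hB.mul hG)).const_mul (c * t ^ j * r ^ e))
  have hfun : (fun y => c * t ^ j * r ^ e * (((Real.sqrt (1 - 4 * y * r ^ 2))⁻¹) ^ m *
      (((1 + Real.sqrt (1 - 4 * y * r ^ 2))⁻¹) ^ p * gDW r y t))) =
      fun y => gTerm r t y (c, j, e, m, p) := rfl
  replace h : HasDerivAt (fun y => gTerm r t y (c, j, e, m, p)) _ a := h
  convert h using 1
  simp only [gTerm, gChild1, gChild2, gChild3, gDW, ← hsdef, Pi.mul_apply]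
  push_cast
  have hsne : s ≠ 0 := hs0.ne'
  have hs1ne : 1 + s ≠ 0 := hs1.ne'
  clear_value s
  simp only [inv_pow]
  field_simp
  ring

lemma gDW_iteratedDeriv (k : ℕ) : ∃ L : List (ℝ × ℕ × ℕ × ℕ × ℕ),
    (∀ q ∈ L, q.2.1 ≤ k ∧ q.2.2.1 ≤ 4 * k) ∧
    ∀ r t a : ℝ, 0 < 1 - 4 * a * r ^ 2 →
      iteratedDeriv k (fun y => gDW r y t) a = (L.map (gTerm r t a)).sum := by
  induction k with
  | zero =>
    refine ⟨[(1, 0, 0, 0, 0)], by simp, ?_⟩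
    intro r t a ha
    simp [gTerm, iteratedDeriv_zero]
  | succ k ih =>
    obtain ⟨L, hL, hform⟩ := ih
    refine ⟨L.map gChild1 ++ L.map gChild2 ++ L.map gChild3, ?_, ?_⟩
    · intro q hq
      rcases List.mem_append.mp hq with hq | hq
      · rcases List.mem_append.mp hq with hq | hq <;>
          obtain ⟨q', hq', rfl⟩ := List.mem_map.mp hq
        · have := hL q' hq'; simp only [gChild1]; omega
        · have := hL q' hq'; simp only [gChild2]; omega
      · obtain ⟨q', hq', rfl⟩ := List.mem_map.mp hq
        have := hL q' hq'; simp only [gChild3]; omega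
    · intro r t a ha
      rw [iteratedDeriv_succ]
      have hopen : IsOpen {y : ℝ | 0 < 1 - 4 * y * r ^ 2} :=
        isOpen_lt continuous_const (by continuity)
      have hev : iteratedDeriv k (fun y => gDW r y t) =ᶠ[nhds a]
          (fun y => (L.map (gTerm r t y)).sum) := by
        filter_upwards [hopen.mem_nhds (show a ∈ {y : ℝ | 0 < 1 - 4 * y * r ^ 2} from ha)]
          with y hy
        exact hform r t y hy
      rw [hev.deriv_eq]
      have hsum : HasDerivAt (fun y => (L.map (gTerm r t y)).sum)
          ((L.map (fun q => gTerm r t a (gChild1 q) + gTerm r t a (gChild2 q) +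
            gTerm r t a (gChild3 q))).sum) a :=
        hasDerivAt_list_sum L _ _ a (fun q _ => gTerm_hasDerivAt r t a ha q)
      rw [hsum.deriv]
      have : (fun q => gTerm r t a (gChild1 q) + gTerm r t a (gChild2 q) +
          gTerm r t a (gChild3 q)) =
          fun q => (gTerm r t a (gChild1 q) + gTerm r t a (gChild2 q)) +
            gTerm r t a (gChild3 q) := rfl
      rw [this, list_sum_map_add, list_sum_map_add]
      rw [List.map_append, List.map_append, List.sum_append, List.sum_append,
        List.map_map, List.map_map, List.map_map]
      rfl

lemma gDW_deriv_bound (k : ℕ) : ∃ M : ℝ, 0 < M ∧ ∀ r t : ℝ, 1 ≤ r → 1 ≤ t →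
    |iteratedDeriv k (fun y => gDW r y t) 0| ≤
      M * (t ^ k * r ^ (4 * k) * Real.exp (-(t * r ^ 2))) := by
  obtain ⟨L, hL, hform⟩ := gDW_iteratedDeriv k
  refine ⟨(L.map (fun q => |q.1|)).sum + 1, ?_, ?_⟩
  · have : 0 ≤ (L.map (fun q => |q.1|)).sum :=
      List.sum_nonneg (by intro x hx; obtain ⟨q, _, rfl⟩ := List.mem_map.mp hx; positivity)
    linarith
  · intro r t hr ht
    have hr0 : (0:ℝ) < r := lt_of_lt_of_le one_pos hr
    have h0 : (0:ℝ) < 1 - 4 * 0 * r ^ 2 := by norm_num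
    rw [hform r t 0 h0]
    have hbase : (0:ℝ) ≤ t ^ k * r ^ (4 * k) * Real.exp (-(t * r ^ 2)) := by positivity
    have hkey : ∀ q ∈ L, |gTerm r t 0 q| ≤
        |q.1| * (t ^ k * r ^ (4 * k) * Real.exp (-(t * r ^ 2))) := by
      intro q hq
      obtain ⟨hj, he⟩ := hL q hq
      obtain ⟨c, j, e, m, p⟩ := q
      simp only at hj he
      have hs : Real.sqrt (1 - 4 * 0 * r ^ 2) = 1 := by
        rw [show (1 - 4 * 0 * r ^ 2 : ℝ) = 1 by ring, Real.sqrt_one]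
      have hgval : gDW r 0 t = Real.exp (-(t * r ^ 2)) := by
        simp only [gDW, hs]
        congr 1
        ring
      simp only [gTerm, hs, hgval, abs_mul]
      have h1 : |t ^ j| ≤ t ^ k := by
        rw [abs_of_nonneg (by positivity)]; exact pow_le_pow_right₀ ht hj
      have h2 : |r ^ e| ≤ r ^ (4 * k) := by
        rw [abs_of_nonneg (by positivity)]; exact pow_le_pow_right₀ hr he
      have h3 : |((1:ℝ)⁻¹) ^ m| ≤ 1 := by norm_num
      have h4 : |((1 + (1:ℝ))⁻¹) ^ p| ≤ 1 := by
        rw [abs_of_nonneg (by positivity)]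
        apply pow_le_one₀ (by norm_num) (by norm_num)
      have h5 : |Real.exp (-(t * r ^ 2))| = Real.exp (-(t * r ^ 2)) :=
        abs_of_nonneg (Real.exp_nonneg _)
      calc |c| * |t ^ j| * |r ^ e| * (|((1:ℝ)⁻¹) ^ m| *
            (|((1 + (1:ℝ))⁻¹) ^ p| * |Real.exp (-(t * r ^ 2))|))
          ≤ |c| * (t ^ k) * (r ^ (4 * k)) * (1 * (1 * Real.exp (-(t * r ^ 2)))) := by
            rw [h5]
            gcongr <;> first | exact abs_nonneg _ | positivity | skip
        _ = |c| * (t ^ k * r ^ (4 * k) * Real.exp (-(t * r ^ 2))) := by ring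
    calc |(L.map (gTerm r t 0)).sum|
        ≤ (L.map (fun q => |q.1| * (t ^ k * r ^ (4 * k) * Real.exp (-(t * r ^ 2))))).sum :=
          abs_list_sum_le _ _ _ hkey
      _ = (L.map (fun q => |q.1|)).sum * (t ^ k * r ^ (4 * k) * Real.exp (-(t * r ^ 2))) :=
          list_sum_map_mul_right L _ _
      _ ≤ ((L.map (fun q => |q.1|)).sum + 1) *
            (t ^ k * r ^ (4 * k) * Real.exp (-(t * r ^ 2))) := by
          apply mul_le_mul_of_nonneg_right _ hbase
          linarith

lemma pow_mul_exp_neg_le (N : ℕ) (x : ℝ) (hx : 0 ≤ x) :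
    x ^ N * Real.exp (-x) ≤ 2 ^ N * (Nat.factorial N) * Real.exp (-x / 2) := by
  have h1 : (x / 2) ^ N / (Nat.factorial N) ≤ Real.exp (x / 2) :=
    Real.pow_div_factorial_le_exp (x := x/2) (by positivity) N
  have h2 : x ^ N ≤ 2 ^ N * (Nat.factorial N) * Real.exp (x / 2) := by
    have h3 : x ^ N = 2 ^ N * (x / 2) ^ N := by
      rw [← mul_pow]; congr 1; ring
    rw [h3]
    have hf : (0:ℝ) < (Nat.factorial N : ℝ) := by positivity
    calc (2:ℝ) ^ N * (x / 2) ^ N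
        ≤ 2 ^ N * ((Nat.factorial N) * Real.exp (x / 2)) := by
          gcongr
          rw [div_le_iff₀ hf] at h1
          linarith [h1]
      _ = 2 ^ N * (Nat.factorial N) * Real.exp (x / 2) := by ring
  calc x ^ N * Real.exp (-x) ≤ (2 ^ N * (Nat.factorial N) * Real.exp (x / 2)) * Real.exp (-x) := by
        gcongr
    _ = 2 ^ N * (Nat.factorial N) * Real.exp (-x / 2) := by
        rw [mul_assoc, mul_assoc, ← Real.exp_add]
        ring_nf

lemma gDW_exp_bound (k : ℕ) : ∃ M : ℝ, 0 < M ∧ ∀ r t : ℝ, 1 ≤ r → 1 ≤ t →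
    |iteratedDeriv k (fun a => gDW r a t) 0| ≤
      M * (Real.exp (-t/2) * Real.exp (-(r ^ 2)/2)) := by
  obtain ⟨M, hM, hbound⟩ := gDW_deriv_bound k
  refine ⟨M * (2 ^ (3*k) * (Nat.factorial (3*k)) * Real.exp (1/2)), by positivity, ?_⟩
  intro r t hr ht
  have ht0 : (0:ℝ) < t := lt_of_lt_of_le one_pos ht
  have hr0 : (0:ℝ) < r := lt_of_lt_of_le one_pos hr
  refine (hbound r t hr ht).trans ?_
  have hstep1 : t ^ k * r ^ (4*k) ≤ (t * r ^ 2) ^ (3*k) := by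
    have hr2 : (1:ℝ) ≤ r ^ 2 := by nlinarith
    have h1 : t ^ k ≤ (t * r ^ 2) ^ k := by
      apply pow_le_pow_left₀ ht0.le
      nlinarith [mul_le_mul_of_nonneg_left hr2 ht0.le]
    have h2 : r ^ (4*k) ≤ (t * r ^ 2) ^ (2*k) := by
      have : r ^ (4*k) = (r ^ 2) ^ (2*k) := by rw [← pow_mul]; ring_nf
      rw [this]
      apply pow_le_pow_left₀ (by positivity)
      nlinarith [mul_le_mul_of_nonneg_right ht (by positivity : (0:ℝ) ≤ r ^ 2)]
    calc t ^ k * r ^ (4*k) ≤ (t * r ^ 2) ^ k * (t * r ^ 2) ^ (2*k) := by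
          apply mul_le_mul h1 h2 (by positivity) (by positivity)
      _ = (t * r ^ 2) ^ (3*k) := by rw [← pow_add]; ring_nf
  have hstep2 : (t * r ^ 2) ^ (3*k) * Real.exp (-(t * r ^ 2)) ≤
      2 ^ (3*k) * (Nat.factorial (3*k)) * Real.exp (-(t * r ^ 2) / 2) :=
    pow_mul_exp_neg_le (3*k) (t * r ^ 2) (by positivity)
  have hstep3 : Real.exp (-(t * r ^ 2) / 2) ≤
      Real.exp (1/2) * (Real.exp (-t/2) * Real.exp (-(r ^ 2)/2)) := by
    rw [← Real.exp_add, ← Real.exp_add]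
    apply Real.exp_le_exp.mpr
    nlinarith [mul_nonneg (show (0:ℝ) ≤ t - 1 by linarith) (show (0:ℝ) ≤ r ^ 2 - 1 by nlinarith)]
  calc M * (t ^ k * r ^ (4*k) * Real.exp (-(t * r ^ 2)))
      ≤ M * ((t * r ^ 2) ^ (3*k) * Real.exp (-(t * r ^ 2))) := by
        gcongr
    _ ≤ M * (2 ^ (3*k) * (Nat.factorial (3*k)) * Real.exp (-(t * r ^ 2) / 2)) := by
        gcongr
    _ ≤ M * (2 ^ (3*k) * (Nat.factorial (3*k)) *
          (Real.exp (1/2) * (Real.exp (-t/2) * Real.exp (-(r ^ 2)/2)))) := by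
        gcongr
    _ = M * (2 ^ (3*k) * (Nat.factorial (3*k)) * Real.exp (1/2)) *
          (Real.exp (-t/2) * Real.exp (-(r ^ 2)/2)) := by ring

lemma D1_bound (l : ℕ) : ∃ M : ℝ, 0 < M ∧ ∀ r t : ℝ, 1 ≤ r → 1 ≤ t →
    |D1 l r t| ≤ M * (Real.exp (-t/2) * Real.exp (-(r ^ 2)/2)) := by
  choose M hMpos hM using gDW_exp_bound
  refine ⟨(∑ k ∈ Finset.range l, (1 / (Nat.factorial k) : ℝ) * M k) + 1, ?_, ?_⟩
  · have : 0 ≤ ∑ k ∈ Finset.range l, (1 / (Nat.factorial k) : ℝ) * M k :=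
      Finset.sum_nonneg fun k _ => mul_nonneg (by positivity) (hMpos k).le
    linarith
  · intro r t hr ht
    have hE : (0:ℝ) ≤ Real.exp (-t/2) * Real.exp (-(r ^ 2)/2) := by positivity
    have h1 : |D1 l r t| ≤
        ∑ k ∈ Finset.range l, (1 / (Nat.factorial k) : ℝ) *
          (M k * (Real.exp (-t/2) * Real.exp (-(r ^ 2)/2))) := by
      unfold D1
      rw [abs_mul, abs_of_nonneg (by norm_num : (0:ℝ) ≤ 1/2)]
      calc (1/2 : ℝ) * |∑ k ∈ Finset.range l, (1 / (Nat.factorial k) : ℝ) *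
            iteratedDeriv k (fun a => gDW r a t) 0|
          ≤ 1 * ∑ k ∈ Finset.range l, |(1 / (Nat.factorial k) : ℝ) *
              iteratedDeriv k (fun a => gDW r a t) 0| := by
            apply mul_le_mul (by norm_num) (Finset.abs_sum_le_sum_abs _ _) (abs_nonneg _)
              (by norm_num)
        _ ≤ ∑ k ∈ Finset.range l, (1 / (Nat.factorial k) : ℝ) *
              (M k * (Real.exp (-t/2) * Real.exp (-(r ^ 2)/2))) := by
            rw [one_mul]
            apply Finset.sum_le_sum
            intro k _
            rw [abs_mul, abs_of_nonneg (by positivity : (0:ℝ) ≤ (1 / (Nat.factorial k) : ℝ))]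
            exact mul_le_mul_of_nonneg_left (hM k r t hr ht) (by positivity)
    refine h1.trans ?_
    have h2 : ∑ k ∈ Finset.range l, (1 / (Nat.factorial k) : ℝ) *
        (M k * (Real.exp (-t/2) * Real.exp (-(r ^ 2)/2)))
        = (∑ k ∈ Finset.range l, (1 / (Nat.factorial k) : ℝ) * M k) *
          (Real.exp (-t/2) * Real.exp (-(r ^ 2)/2)) := by
      rw [Finset.sum_mul]
      apply Finset.sum_congr rfl
      intro k _
      ring
    rw [h2]
    apply mul_le_mul_of_nonneg_right _ hE
    linarith [Finset.sum_nonneg (fun k (_ : k ∈ Finset.range l) =>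
      mul_nonneg (by positivity : (0:ℝ) ≤ (1 / (Nat.factorial k) : ℝ)) (hMpos k).le)]

lemma exp_neg_sq_le (b : ℕ) (r : ℝ) (hr : 1 ≤ r) :
    Real.exp (-(r ^ 2)/2) ≤ (Nat.factorial b) * 2 ^ b * (r⁻¹) ^ b := by
  have hr0 : (0:ℝ) < r := lt_of_lt_of_le one_pos hr
  have hr2 : (1:ℝ) ≤ r ^ 2 := by nlinarith
  have hpos : (0:ℝ) < (r ^ 2 / 2) ^ b / (Nat.factorial b) := by positivity
  have hx : (r ^ 2 / 2) ^ b / (Nat.factorial b) ≤ Real.exp (r ^ 2 / 2) :=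
    Real.pow_div_factorial_le_exp (x := r ^ 2 / 2) (by positivity) b
  have h1 : Real.exp (-(r ^ 2)/2) ≤ ((r ^ 2 / 2) ^ b / (Nat.factorial b))⁻¹ := by
    rw [show -(r ^ 2)/2 = -(r ^ 2 / 2) by ring, Real.exp_neg]
    exact inv_anti₀ hpos hx
  refine h1.trans ?_
  have h2 : ((r ^ 2 / 2) ^ b / (Nat.factorial b))⁻¹ =
      (Nat.factorial b) * 2 ^ b * ((r ^ 2) ^ b)⁻¹ := by
    have hf : (0:ℝ) < (Nat.factorial b : ℝ) := by positivity
    have hrb : (0:ℝ) < (r ^ 2) ^ b := by positivity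
    field_simp
    rw [← mul_pow, div_mul_cancel₀ _ two_ne_zero]
  rw [h2]
  have h3 : ((r ^ 2) ^ b)⁻¹ ≤ (r ^ b)⁻¹ := by
    apply inv_anti₀ (by positivity)
    apply pow_le_pow_left₀ hr0.le (by nlinarith)
  calc (Nat.factorial b : ℝ) * 2 ^ b * ((r ^ 2) ^ b)⁻¹
      ≤ (Nat.factorial b) * 2 ^ b * (r ^ b)⁻¹ := by gcongr
    _ = (Nat.factorial b) * 2 ^ b * (r⁻¹) ^ b := by rw [inv_pow]

lemma master_pointwise (b l : ℕ) (hb1 : 1 ≤ b) : ∃ M : ℝ, 0 < M ∧ ∀ r t : ℝ, 1 ≤ r → 1 ≤ t →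
    |K0 t r - Real.exp (-t/2) * W1 b r t - D1 l r t| ≤
      M * (t ^ b * Real.exp (-t/2) * (r⁻¹) ^ b) := by
  obtain ⟨M₁, hM₁, hb₁⟩ := fDW_taylor_bound b hb1
  obtain ⟨M₂, hM₂, hb₂⟩ := D1_bound l
  refine ⟨M₁ + M₂ * ((Nat.factorial b) * 2 ^ b), by positivity, ?_⟩
  intro r t hr ht
  have hr0 : (0:ℝ) < r := lt_of_lt_of_le one_pos hr
  have ht0 : (0:ℝ) < t := lt_of_lt_of_le one_pos ht
  have hK0 : K0 t r = Real.exp (-t/2) * Real.cos (t * Real.sqrt (r ^ 2 - 1/4)) := by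
    rw [K0, if_neg]
    linarith
  have hW : |Real.cos (t * Real.sqrt (r ^ 2 - 1/4)) - W1 b r t| ≤ M₁ * (t ^ b * (r⁻¹) ^ b) :=
    hb₁ r t hr ht
  have hD : |D1 l r t| ≤ M₂ * (Real.exp (-t/2) * Real.exp (-(r ^ 2)/2)) := hb₂ r t hr ht
  have hsplit : |K0 t r - Real.exp (-t/2) * W1 b r t - D1 l r t| ≤
      Real.exp (-t/2) * |Real.cos (t * Real.sqrt (r ^ 2 - 1/4)) - W1 b r t| + |D1 l r t| := by
    rw [hK0]
    calc |Real.exp (-t/2) * Real.cos (t * Real.sqrt (r ^ 2 - 1/4)) -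
          Real.exp (-t/2) * W1 b r t - D1 l r t|
        ≤ |Real.exp (-t/2) * Real.cos (t * Real.sqrt (r ^ 2 - 1/4)) -
            Real.exp (-t/2) * W1 b r t| + |D1 l r t| := abs_sub _ _
      _ = Real.exp (-t/2) * |Real.cos (t * Real.sqrt (r ^ 2 - 1/4)) - W1 b r t| + |D1 l r t| := by
          rw [← mul_sub, abs_mul, abs_of_nonneg (Real.exp_nonneg _)]
  refine hsplit.trans ?_
  have hD2 : |D1 l r t| ≤ M₂ * ((Nat.factorial b) * 2 ^ b) * (Real.exp (-t/2) * (r⁻¹) ^ b) := by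
    refine hD.trans ?_
    calc M₂ * (Real.exp (-t/2) * Real.exp (-(r ^ 2)/2))
        ≤ M₂ * (Real.exp (-t/2) * ((Nat.factorial b) * 2 ^ b * (r⁻¹) ^ b)) := by
          gcongr
          exact exp_neg_sq_le b r hr
      _ = M₂ * ((Nat.factorial b) * 2 ^ b) * (Real.exp (-t/2) * (r⁻¹) ^ b) := by ring
  have htb : (1:ℝ) ≤ t ^ b := one_le_pow₀ ht
  calc Real.exp (-t/2) * |Real.cos (t * Real.sqrt (r ^ 2 - 1/4)) - W1 b r t| + |D1 l r t|
      ≤ Real.exp (-t/2) * (M₁ * (t ^ b * (r⁻¹) ^ b)) +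
          M₂ * ((Nat.factorial b) * 2 ^ b) * (Real.exp (-t/2) * (r⁻¹) ^ b) := by
        gcongr
    _ ≤ M₁ * (t ^ b * Real.exp (-t/2) * (r⁻¹) ^ b) +
          M₂ * ((Nat.factorial b) * 2 ^ b) * (t ^ b * Real.exp (-t/2) * (r⁻¹) ^ b) := by
        have h1 : Real.exp (-t/2) * (M₁ * (t ^ b * (r⁻¹) ^ b)) =
            M₁ * (t ^ b * Real.exp (-t/2) * (r⁻¹) ^ b) := by ring
        rw [h1]
        gcongr
        calc Real.exp (-t/2) = 1 * Real.exp (-t/2) := by ring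
          _ ≤ t ^ b * Real.exp (-t/2) :=
              mul_le_mul_of_nonneg_right htb (Real.exp_nonneg _)
    _ = (M₁ + M₂ * ((Nat.factorial b) * 2 ^ b)) * (t ^ b * Real.exp (-t/2) * (r⁻¹) ^ b) := by
        ring


/-- High-frequency estimate for `m¹_{b,ℓ,H}`: `‖m¹_{b,ℓ,H}(·,t)‖₂ ≤ C t^b e^{−t/2}`. -/
theorem stmt_1 (n b l : ℕ) (hn : 1 ≤ n) (hb : (n : ℝ) / 2 < (b : ℝ)) (hl : 1 ≤ l)
    (χL χH : ℝ → ℝ) (hχLsmooth : ContDiff ℝ (⊤ : ℕ∞) χL) (hχHsmooth : ContDiff ℝ (⊤ : ℕ∞) χH)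
    (hχL0 : ∀ r : ℝ, 0 ≤ χL r) (hχL1 : ∀ r : ℝ, χL r ≤ 1)
    (hχH0 : ∀ r : ℝ, 0 ≤ χH r) (hχH1 : ∀ r : ℝ, χH r ≤ 1)
    (hχLone : ∀ r : ℝ, r ≤ 1/4 → χL r = 1) (hχLzero : ∀ r : ℝ, 1/3 ≤ r → χL r = 0)
    (hχHzero : ∀ r : ℝ, r ≤ 1 → χH r = 0) (hχHone : ∀ r : ℝ, 2 ≤ r → χH r = 1) :
    ∃ C : ℝ, 0 < C ∧ ∀ t : ℝ, 1 ≤ t →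
      eLpNorm
        (fun ξ : EuclideanSpace ℝ (Fin n) =>
          χH ‖ξ‖ * (K0 t ‖ξ‖ - Real.exp (-t/2) * W1 b ‖ξ‖ t - D1 l ‖ξ‖ t)) 2 volume
      ≤ ENNReal.ofReal (C * t ^ (b : ℝ) * Real.exp (-t/2)) := by
  have hb1 : 1 ≤ b := by
    rcases Nat.eq_zero_or_pos b with hb0 | h
    · rw [hb0] at hb
      norm_num at hb
      have : (1:ℝ) ≤ (n:ℝ) := by exact_mod_cast hn
      linarith
    · exact h
  obtain ⟨M, hM, hpt⟩ := master_pointwise b l hb1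
  have hfinrank : ((Module.finrank ℝ (EuclideanSpace ℝ (Fin n))) : ℝ) < 2 * b := by
    rw [finrank_euclideanSpace_fin]
    linarith
  set g₀ : EuclideanSpace ℝ (Fin n) → ℝ := fun ξ => ((1 : ℝ) + ‖ξ‖) ^ (-(b:ℝ)) with hg₀def
  have hg₀meas : AEStronglyMeasurable g₀ volume :=
    Measurable.aestronglyMeasurable (by fun_prop)
  have hg₀nonneg : ∀ ξ, 0 ≤ g₀ ξ := fun ξ => Real.rpow_nonneg (by positivity) _
  have hsq : (fun ξ : EuclideanSpace ℝ (Fin n) => g₀ ξ ^ 2) =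
      fun ξ : EuclideanSpace ℝ (Fin n) => ((1:ℝ) + ‖ξ‖) ^ (-(2 * b : ℝ)) := by
    funext ξ
    have h1 : (0:ℝ) < 1 + ‖ξ‖ := by positivity
    simp only [hg₀def]
    rw [pow_two, ← Real.rpow_add h1]
    congr 1
    ring
  have hint : Integrable (fun ξ : EuclideanSpace ℝ (Fin n) =>
      ((1:ℝ) + ‖ξ‖) ^ (-(2 * b : ℝ))) volume := integrable_one_add_norm hfinrank
  have hmem : MemLp g₀ 2 volume := by
    rw [memLp_two_iff_integrable_sq hg₀meas]
    rw [hsq]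
    exact hint
  set C₀ := (eLpNorm g₀ 2 volume).toReal with hC₀def
  have hC₀nonneg : 0 ≤ C₀ := ENNReal.toReal_nonneg
  have hC₀ : eLpNorm g₀ 2 volume = ENNReal.ofReal C₀ :=
    (ENNReal.ofReal_toReal hmem.eLpNorm_lt_top.ne).symm
  refine ⟨M * 2 ^ b * C₀ + 1, by positivity, ?_⟩
  intro t ht
  have ht0 : (0:ℝ) < t := lt_of_lt_of_le one_pos ht
  set K : ℝ := M * 2 ^ b * (t ^ b * Real.exp (-t/2)) with hKdef
  have hK0 : 0 ≤ K := by positivity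
  have hpoint : ∀ ξ : EuclideanSpace ℝ (Fin n),
      ‖χH ‖ξ‖ * (K0 t ‖ξ‖ - Real.exp (-t/2) * W1 b ‖ξ‖ t - D1 l ‖ξ‖ t)‖ ≤
        ‖K * g₀ ξ‖ := by
    intro ξ
    have hRHS : ‖K * g₀ ξ‖ = K * g₀ ξ := by
      rw [Real.norm_eq_abs, abs_of_nonneg (mul_nonneg hK0 (hg₀nonneg ξ))]
    rw [hRHS, Real.norm_eq_abs]
    rcases le_or_gt ‖ξ‖ 1 with hle | hgt
    · rw [hχHzero _ hle, zero_mul, abs_zero]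
      exact mul_nonneg hK0 (hg₀nonneg ξ)
    · set r := ‖ξ‖ with hrdef
      have hr1 : 1 ≤ r := le_of_lt hgt
      have hr0 : (0:ℝ) < r := lt_of_lt_of_le one_pos hr1
      have hχHb : |χH r| ≤ 1 := by
        rw [abs_of_nonneg (hχH0 r)]; exact hχH1 r
      have hin := hpt r t hr1 ht
      have hinvb : (r⁻¹) ^ b ≤ 2 ^ b * g₀ ξ := by
        have hrp : ((1:ℝ) + r) ^ (-(b:ℝ)) = (((1:ℝ) + r) ^ b)⁻¹ := by
          rw [Real.rpow_neg (by positivity), Real.rpow_natCast]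
        have hg₀val : g₀ ξ = (((1:ℝ) + r) ^ b)⁻¹ := by
          simp only [hg₀def, ← hrdef, hrp]
        rw [hg₀val]
        have h2r : ((1:ℝ) + r) ^ b ≤ (2 * r) ^ b := by
          apply pow_le_pow_left₀ (by positivity)
          linarith
        have hinv : ((2 * r) ^ b)⁻¹ ≤ (((1:ℝ) + r) ^ b)⁻¹ :=
          inv_anti₀ (by positivity) h2r
        calc (r⁻¹) ^ b = 2 ^ b * ((2 * r) ^ b)⁻¹ := by
              rw [mul_pow, mul_inv]
              rw [inv_pow]
              field_simp
          _ ≤ 2 ^ b * (((1:ℝ) + r) ^ b)⁻¹ := by gcongr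
      calc |χH r * (K0 t r - Real.exp (-t/2) * W1 b r t - D1 l r t)|
          ≤ 1 * (M * (t ^ b * Real.exp (-t/2) * (r⁻¹) ^ b)) := by
            rw [abs_mul]
            apply mul_le_mul hχHb hin (abs_nonneg _) (by norm_num)
        _ = M * (t ^ b * Real.exp (-t/2)) * (r⁻¹) ^ b := by ring
        _ ≤ M * (t ^ b * Real.exp (-t/2)) * (2 ^ b * g₀ ξ) := by
            gcongr
        _ = K * g₀ ξ := by rw [hKdef]; ring
  calc eLpNorm (fun ξ : EuclideanSpace ℝ (Fin n) =>
          χH ‖ξ‖ * (K0 t ‖ξ‖ - Real.exp (-t/2) * W1 b ‖ξ‖ t - D1 l ‖ξ‖ t)) 2 volume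
      ≤ eLpNorm (fun ξ => K * g₀ ξ) 2 volume := eLpNorm_mono hpoint
    _ = ‖K‖ₑ * eLpNorm g₀ 2 volume := by
        rw [show (fun ξ => K * g₀ ξ) = K • g₀ from rfl]
        exact eLpNorm_const_smul K g₀ 2 volume
    _ = ENNReal.ofReal K * ENNReal.ofReal C₀ := by
        rw [hC₀, Real.enorm_eq_ofReal hK0]
    _ = ENNReal.ofReal (K * C₀) := (ENNReal.ofReal_mul hK0).symm
    _ ≤ ENNReal.ofReal ((M * 2 ^ b * C₀ + 1) * t ^ (b:ℝ) * Real.exp (-t/2)) := by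
        apply ENNReal.ofReal_le_ofReal
        rw [Real.rpow_natCast]
        calc K * C₀ = M * 2 ^ b * C₀ * (t ^ b * Real.exp (-t/2)) := by rw [hKdef]; ring
          _ ≤ (M * 2 ^ b * C₀ + 1) * (t ^ b * Real.exp (-t/2)) := by
              apply mul_le_mul_of_nonneg_right _ (by positivity)
              linarith
          _ = (M * 2 ^ b * C₀ + 1) * t ^ b * Real.exp (-t/2) := by ring
end

section
/- Let b ∈ ℕ. (i) There exists a constant C¹_b > 0 such that |∂_c^b f(r,c,t)| ≤ C¹_b t^b r^{−b} for all t ≥ 1, all r ≥ 1 and all 0 ≤ c ≤ 1/4. (ii) There exists a constant C²_b > 0 such that |∂_c^b f(r,0,t)| ≤ C²_b t^b r^{−b} for all t ≥ 1 and all r > 0. -/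
/-!
Let `Φ(x) = ∑ (-1)ⁿ xⁿ / (2n)!`, the entire function with `Φ(x) = cos √x` for `x ≥ 0`. Then
`f(r,c,t) = Φ(t²(r² - c))`, so `∂_c^b f = (-t²)^b Φ^(b)(t²(r² - c))`. The power series bounds
`Φ^(b)` by `e` on `[-1, 1]`. On `(0, ∞)`, `Φ^(b)` is a linear combination of the functions
`cos (√x + θ) / √x ^ j` with `j ≥ b`, since differentiating such a function produces two of the
same kind with `j` raised by one and by two; hence `|Φ^(b)(x)| ≤ A x^(-b/2)` for `x ≥ 1`, and so
for all `x > 0`. This gives `|∂_c^b f| ≤ A t^b (r² - c)^(-b/2)`, and `r² - c ≥ r²/4` in (i),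
`r² - c = r²` in (ii).
-/

open Real Set Nat Submodule

section FactorialSeries

variable {a : ℕ → ℝ}

lemma summable_mul_pow_of_abs_le_inv_factorial (ha : ∀ n, |a n| ≤ 1 / n !) (x : ℝ) :
    Summable fun n => a n * x ^ n :=
  .of_norm_bounded (Real.summable_pow_div_factorial |x|) fun n => by
    rw [norm_mul, norm_pow, Real.norm_eq_abs, Real.norm_eq_abs, div_eq_mul_one_div, mul_comm]
    gcongr
    exact ha n

lemma abs_tsum_mul_pow_le_exp_abs (ha : ∀ n, |a n| ≤ 1 / n !) (x : ℝ) :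
    |∑' n, a n * x ^ n| ≤ exp |x| := by
  have hexp : HasSum (fun n => |x| ^ n / n !) (exp |x|) := by
    rw [Real.exp_eq_exp_ℝ]
    exact NormedSpace.expSeries_div_hasSum_exp |x|
  refine tsum_of_norm_bounded (f := fun n => a n * x ^ n) hexp fun n => ?_
  rw [norm_mul, norm_pow, Real.norm_eq_abs, Real.norm_eq_abs, div_eq_mul_one_div, mul_comm]
  gcongr
  exact ha n

lemma summable_nat_mul_pow_div_factorial (R : ℝ) (hR : 0 ≤ R) :
    Summable fun n : ℕ => n * R ^ n / n ! :=
  .of_nonneg_of_le (fun n => by positivity) (fun n => by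
      rw [mul_pow]
      gcongr
      exact_mod_cast (Nat.lt_two_pow_self (n := n)).le)
    (Real.summable_pow_div_factorial (2 * R))

lemma norm_mul_nat_mul_pow_pred_le (ha : ∀ n, |a n| ≤ 1 / n !) {R y : ℝ} (hR : 1 ≤ R)
    (hy : |y| ≤ R) (n : ℕ) : ‖a n * (n * y ^ (n - 1))‖ ≤ n * R ^ n / n ! := by
  rw [Real.norm_eq_abs, abs_mul, abs_mul, Nat.abs_cast, abs_pow]
  calc |a n| * (n * |y| ^ (n - 1)) ≤ 1 / n ! * (n * R ^ (n - 1)) := by gcongr; exact ha n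
    _ ≤ 1 / n ! * (n * R ^ n) := by gcongr; exact n.sub_le 1
    _ = n * R ^ n / n ! := by ring

lemma hasDerivAt_tsum_mul_pow (ha : ∀ n, |a n| ≤ 1 / n !) (x : ℝ) :
    HasDerivAt (fun y => ∑' n, a n * y ^ n) (∑' n, a (n + 1) * (n + 1) * x ^ n) x := by
  set R := |x| + 1
  have hR : 1 ≤ R := by simp [R]
  have hxR : x ∈ Ioo (-R) R := abs_lt.1 (lt_add_one |x|)
  have hbound := summable_nat_mul_pow_div_factorial R (by linarith)
  have hderiv := hasDerivAt_tsum_of_isPreconnected hbound isOpen_Ioo (convex_Ioo _ _).isPreconnected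
    (fun n y _ => (hasDerivAt_pow n y).const_mul (a n))
    (fun n y hy => norm_mul_nat_mul_pow_pred_le ha hR (abs_le.2 ⟨hy.1.le, hy.2.le⟩) n)
    hxR (summable_mul_pow_of_abs_le_inv_factorial ha x) hxR
  refine hderiv.congr_deriv ?_
  have hsum := Summable.of_norm_bounded hbound
    (norm_mul_nat_mul_pow_pred_le ha hR (lt_add_one |x|).le)
  rw [hsum.tsum_eq_zero_add]
  simp only [CharP.cast_eq_zero, zero_mul, mul_zero, zero_add, Nat.add_sub_cancel, Nat.cast_add,
    Nat.cast_one]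
  exact tsum_congr fun n => by ring

end FactorialSeries

/-- The `b`-th derivative of `Φ(x) = ∑ (-1)ⁿ xⁿ / (2n)!`, the entire function equal to `cos √x`
on `[0, ∞)`. -/
noncomputable def cosSqrtDeriv (b : ℕ) (x : ℝ) : ℝ :=
  ∑' n, (-1) ^ (n + b) * (n + b)! / (n ! * (2 * (n + b))!) * x ^ n

lemma abs_cosSqrtDeriv_coeff_le (b n : ℕ) :
    |(-1) ^ (n + b) * (n + b)! / (n ! * (2 * (n + b))! : ℝ)| ≤ 1 / n ! := by
  have hfac : ((n + b)! : ℝ) ≤ (2 * (n + b))! := by exact_mod_cast Nat.factorial_le (by omega)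
  rw [abs_div, abs_mul, abs_pow, abs_neg, abs_one, one_pow, one_mul, abs_of_pos (by positivity),
    abs_of_pos (by positivity), div_le_div_iff₀ (by positivity) (by positivity), one_mul,
    mul_comm]
  gcongr

lemma hasDerivAt_cosSqrtDeriv (b : ℕ) (x : ℝ) :
    HasDerivAt (cosSqrtDeriv b) (cosSqrtDeriv (b + 1) x) x := by
  refine (hasDerivAt_tsum_mul_pow (abs_cosSqrtDeriv_coeff_le b) x).congr_deriv
    (tsum_congr fun n => ?_)
  rw [show n + 1 + b = n + (b + 1) by omega, Nat.factorial_succ]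
  push_cast
  field_simp

lemma cosSqrtDeriv_zero_of_nonneg {x : ℝ} (hx : 0 ≤ x) : cosSqrtDeriv 0 x = cos √x := by
  rw [Real.cos_eq_tsum, cosSqrtDeriv]
  refine tsum_congr fun n => ?_
  rw [pow_mul, Real.sq_sqrt hx, add_zero]
  field_simp

lemma abs_cosSqrtDeriv_le_exp_abs (b : ℕ) (x : ℝ) : |cosSqrtDeriv b x| ≤ exp |x| :=
  abs_tsum_mul_pow_le_exp_abs (abs_cosSqrtDeriv_coeff_le b) x

def cosSqrtTerms (b : ℕ) : Set (ℝ → ℝ) :=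
  {g | ∃ θ : ℝ, ∃ j ≥ b, g = fun x => cos (√x + θ) / √x ^ j}

lemma hasDerivAt_cos_sqrt_add_div_sqrt_pow (θ : ℝ) (j : ℕ) {x : ℝ} (hx : 0 < x) :
    HasDerivAt (fun y => cos (√y + θ) / √y ^ j)
      (1 / 2 * (cos (√x + (θ + π / 2)) / √x ^ (j + 1)) - j / 2 * (cos (√x + θ) / √x ^ (j + 2)))
      x := by
  have hs : 0 < √x := Real.sqrt_pos.2 hx
  have hsqrt := Real.hasDerivAt_sqrt hx.ne'
  have hcos : HasDerivAt (fun y => cos (√y + θ)) (-sin (√x + θ) * (1 / (2 * √x))) x :=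
    (Real.hasDerivAt_cos _).comp x (hsqrt.add_const θ)
  have hpow : HasDerivAt (fun y => √y ^ j) (j * √x ^ (j - 1) * (1 / (2 * √x))) x :=
    (hasDerivAt_pow j _).comp x hsqrt
  refine (hcos.div hpow (pow_ne_zero j hs.ne')).congr_deriv ?_
  rw [← add_assoc, Real.cos_add_pi_div_two]
  rcases j with _ | j
  · field_simp
    ring
  · field_simp
    push_cast
    ring

lemma exists_hasDerivAt_mem_span_cosSqrtTerms {b : ℕ} {g : ℝ → ℝ}
    (hg : g ∈ span ℝ (cosSqrtTerms b)) :
    ∃ g' ∈ span ℝ (cosSqrtTerms (b + 1)), ∀ x, 0 < x → HasDerivAt g (g' x) x := by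
  induction hg using Submodule.span_induction with
  | mem g hg =>
    obtain ⟨θ, j, hj, rfl⟩ := hg
    refine ⟨(1 / 2 : ℝ) • (fun x => cos (√x + (θ + π / 2)) / √x ^ (j + 1))
      - (j / 2 : ℝ) • (fun x => cos (√x + θ) / √x ^ (j + 2)), ?_,
      fun x hx => hasDerivAt_cos_sqrt_add_div_sqrt_pow θ j hx⟩
    exact sub_mem (smul_mem _ _ (subset_span ⟨_, j + 1, by omega, rfl⟩))
      (smul_mem _ _ (subset_span ⟨_, j + 2, by omega, rfl⟩))
  | zero => exact ⟨0, zero_mem _, fun x _ => hasDerivAt_const x 0⟩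
  | add g₁ g₂ _ _ ih₁ ih₂ =>
    obtain ⟨g₁', hg₁', h₁⟩ := ih₁
    obtain ⟨g₂', hg₂', h₂⟩ := ih₂
    exact ⟨g₁' + g₂', add_mem hg₁' hg₂', fun x hx => (h₁ x hx).add (h₂ x hx)⟩
  | smul c g _ ih =>
    obtain ⟨g', hg', h⟩ := ih
    exact ⟨c • g', smul_mem _ c hg', fun x hx => (h x hx).const_mul c⟩

lemma exists_abs_le_div_sqrt_pow_of_mem_span_cosSqrtTerms {b : ℕ} {g : ℝ → ℝ}
    (hg : g ∈ span ℝ (cosSqrtTerms b)) : ∃ A, ∀ x, 1 ≤ x → |g x| ≤ A / √x ^ b := by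
  induction hg using Submodule.span_induction with
  | mem g hg =>
    obtain ⟨θ, j, hj, rfl⟩ := hg
    refine ⟨1, fun x hx => ?_⟩
    have hs : 1 ≤ √x := Real.one_le_sqrt.2 hx
    rw [abs_div, abs_pow, abs_of_pos (zero_lt_one.trans_le hs)]
    calc |cos (√x + θ)| / √x ^ j ≤ 1 / √x ^ j := by gcongr; exact abs_cos_le_one _
      _ ≤ 1 / √x ^ b := by gcongr
  | zero => exact ⟨0, fun x _ => by simp⟩
  | add g₁ g₂ _ _ ih₁ ih₂ =>
    obtain ⟨A₁, h₁⟩ := ih₁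
    obtain ⟨A₂, h₂⟩ := ih₂
    refine ⟨A₁ + A₂, fun x hx => ?_⟩
    rw [add_div]
    exact (abs_add_le _ _).trans (add_le_add (h₁ x hx) (h₂ x hx))
  | smul c g _ ih =>
    obtain ⟨A, h⟩ := ih
    refine ⟨|c| * A, fun x hx => ?_⟩
    rw [Pi.smul_apply, smul_eq_mul, abs_mul, mul_div_assoc]
    exact mul_le_mul_of_nonneg_left (h x hx) (abs_nonneg c)

lemma exists_mem_span_cosSqrtTerms_eqOn_cosSqrtDeriv (b : ℕ) :
    ∃ g ∈ span ℝ (cosSqrtTerms b), EqOn (cosSqrtDeriv b) g (Ioi 0) := by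
  induction b with
  | zero =>
    refine ⟨fun x => cos (√x + 0) / √x ^ 0, subset_span ⟨0, 0, le_rfl, rfl⟩, fun x hx => ?_⟩
    simp [cosSqrtDeriv_zero_of_nonneg (le_of_lt hx)]
  | succ b ih =>
    obtain ⟨g, hg, hEq⟩ := ih
    obtain ⟨g', hg', hderiv⟩ := exists_hasDerivAt_mem_span_cosSqrtTerms hg
    refine ⟨g', hg', fun x hx => (hasDerivAt_cosSqrtDeriv b x).unique ?_⟩
    exact (hderiv x hx).congr_of_eventuallyEq (hEq.eventuallyEq_of_mem (Ioi_mem_nhds hx))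

lemma exists_abs_cosSqrtDeriv_le (b : ℕ) :
    ∃ A > 0, ∀ x, 0 < x → |cosSqrtDeriv b x| ≤ A / √x ^ b := by
  obtain ⟨g, hg, hEq⟩ := exists_mem_span_cosSqrtTerms_eqOn_cosSqrtDeriv b
  obtain ⟨A, hA⟩ := exists_abs_le_div_sqrt_pow_of_mem_span_cosSqrtTerms hg
  refine ⟨max A (exp 1), by positivity, fun x hx => ?_⟩
  have hs : 0 < √x := Real.sqrt_pos.2 hx
  rcases le_or_gt 1 x with hx1 | hx1
  · rw [hEq hx]
    exact (hA x hx1).trans (by gcongr; exact le_max_left _ _)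
  · have hpow : √x ^ b ≤ 1 := pow_le_one₀ hs.le (Real.sqrt_le_one.2 hx1.le)
    calc |cosSqrtDeriv b x| ≤ exp |x| := abs_cosSqrtDeriv_le_exp_abs b x
      _ ≤ exp 1 := by gcongr; rw [abs_of_pos hx]; exact hx1.le
      _ ≤ exp 1 / √x ^ b := le_div_self (by positivity) (by positivity) hpow
      _ ≤ max A (exp 1) / √x ^ b := by gcongr; exact le_max_right _ _

lemma iteratedDeriv_comp_const_add_mul {F : ℕ → ℝ → ℝ}
    (hF : ∀ n x, HasDerivAt (F n) (F (n + 1) x) x) (p q : ℝ) (b : ℕ) :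
    iteratedDeriv b (fun y => F 0 (p + q * y)) = fun y => q ^ b * F b (p + q * y) := by
  induction b with
  | zero => simp
  | succ n ih =>
    funext y
    have hinner : HasDerivAt (fun y => p + q * y) q y := by
      simpa using ((hasDerivAt_id y).const_mul q).const_add p
    have hderiv : HasDerivAt (fun y => q ^ n * F n (p + q * y))
        (q ^ n * (F (n + 1) (p + q * y) * q)) y :=
      ((hF n _).comp y hinner).const_mul _
    rw [iteratedDeriv_succ, ih, hderiv.deriv]
    ring

lemma iteratedDeriv_cos_mul_sqrt_sub (b : ℕ) {t s c : ℝ} (ht : 0 ≤ t) (hc : c < s) :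
    iteratedDeriv b (fun c' => cos (t * √(s - c'))) c
      = (-t ^ 2) ^ b * cosSqrtDeriv b (t ^ 2 * (s - c)) := by
  have hlocal : (fun c' => cos (t * √(s - c')))
      =ᶠ[nhds c] fun c' => cosSqrtDeriv 0 (t ^ 2 * s + -t ^ 2 * c') := by
    filter_upwards [Iio_mem_nhds hc] with c' hc'
    rw [show t ^ 2 * s + -t ^ 2 * c' = t ^ 2 * (s - c') by ring,
      cosSqrtDeriv_zero_of_nonneg (mul_nonneg (sq_nonneg t) (sub_pos.2 hc').le),
      Real.sqrt_mul (sq_nonneg t), Real.sqrt_sq ht]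
  rw [hlocal.iteratedDeriv_eq,
    iteratedDeriv_comp_const_add_mul hasDerivAt_cosSqrtDeriv (t ^ 2 * s) (-t ^ 2) b]
  ring_nf

lemma exists_abs_iteratedDeriv_cos_mul_sqrt_sub_le (b : ℕ) :
    ∃ A > 0, ∀ t s c : ℝ, 0 < t → c < s →
      |iteratedDeriv b (fun c' => cos (t * √(s - c'))) c| ≤ A * t ^ b / √(s - c) ^ b := by
  obtain ⟨A, hA, hbound⟩ := exists_abs_cosSqrtDeriv_le b
  refine ⟨A, hA, fun t s c ht hc => ?_⟩
  have hsc : 0 < s - c := sub_pos.2 hc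
  have hsqrt : √(t ^ 2 * (s - c)) = t * √(s - c) := by
    rw [Real.sqrt_mul (sq_nonneg t), Real.sqrt_sq ht.le]
  rw [iteratedDeriv_cos_mul_sqrt_sub b ht.le hc, abs_mul, abs_pow, abs_neg, abs_sq]
  calc (t ^ 2) ^ b * |cosSqrtDeriv b (t ^ 2 * (s - c))|
      ≤ (t ^ 2) ^ b * (A / √(t ^ 2 * (s - c)) ^ b) := by gcongr; exact hbound _ (by positivity)
    _ = A * t ^ b / √(s - c) ^ b := by
      have hpos : 0 < √(s - c) := Real.sqrt_pos.2 hsc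
      rw [hsqrt]
      field_simp
      ring

theorem stmt_7_general (b : ℕ) :
    (∃ C : ℝ, 0 < C ∧ ∀ t : ℝ, 1 ≤ t → ∀ r : ℝ, 1 ≤ r → ∀ c ∈ Set.Icc (0:ℝ) (1/4),
      |iteratedDeriv b (fun c' : ℝ => Real.cos (t * Real.sqrt (r ^ 2 - c'))) c|
        ≤ C * t ^ b / r ^ b) ∧
    (∃ C : ℝ, 0 < C ∧ ∀ t : ℝ, 1 ≤ t → ∀ r : ℝ, 0 < r →
      |iteratedDeriv b (fun c' : ℝ => Real.cos (t * Real.sqrt (r ^ 2 - c'))) 0|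
        ≤ C * t ^ b / r ^ b) := by
  obtain ⟨A, hA, hbound⟩ := exists_abs_iteratedDeriv_cos_mul_sqrt_sub_le b
  refine ⟨⟨A * 2 ^ b, by positivity, fun t ht r hr c ⟨_, hc⟩ => ?_⟩,
    ⟨A, hA, fun t ht r hr => ?_⟩⟩
  · have hhalf : r / 2 ≤ √(r ^ 2 - c) :=
      (Real.le_sqrt (by positivity) (by nlinarith)).2 (by nlinarith)
    calc _ ≤ A * t ^ b / √(r ^ 2 - c) ^ b := hbound t _ c (by linarith) (by nlinarith)
      _ ≤ A * t ^ b / (r / 2) ^ b := by gcongr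
      _ = A * 2 ^ b * t ^ b / r ^ b := by rw [div_pow]; field_simp
  · have h := hbound t (r ^ 2) 0 (by linarith) (by positivity)
    rwa [sub_zero, Real.sqrt_sq hr.le] at h

/-- Pointwise estimates for the `b`-th derivative in `c` of
`f(r,c,t) = cos(t·√(r²−c))` in the high-frequency region. -/
theorem stmt_7 (b : ℕ) (hb : 1 ≤ b) :
    (∃ C : ℝ, 0 < C ∧ ∀ t : ℝ, 1 ≤ t → ∀ r : ℝ, 1 ≤ r → ∀ c ∈ Set.Icc (0:ℝ) (1/4),
      |iteratedDeriv b (fun c' : ℝ => Real.cos (t * Real.sqrt (r ^ 2 - c'))) c|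
        ≤ C * t ^ b / r ^ b) ∧
    (∃ C : ℝ, 0 < C ∧ ∀ t : ℝ, 1 ≤ t → ∀ r : ℝ, 0 < r →
      |iteratedDeriv b (fun c' : ℝ => Real.cos (t * Real.sqrt (r ^ 2 - c'))) 0|
        ≤ C * t ^ b / r ^ b) :=
  stmt_7_general b
end

section
/- Let t ∈ ℝ and let r, c ∈ ℝ with c < r². Then for every integer k ≥ 2, F_k(r,c,t) = (1/(4(r²−c)))·(−t² F_{k−2}(r,c,t) + 2(2k−3) F_{k−1}(r,c,t)). -/
open Real Filter Set Topology

private lemma iterderiv_open' {f : ℝ → ℝ} {s : Set ℝ} (hs : IsOpen s) {x : ℝ} (hx : x ∈ s) (n : ℕ) :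
    iteratedDerivWithin n f s x = iteratedDeriv n f x := by
  rw [iteratedDerivWithin_eq_iteratedFDerivWithin, iteratedDeriv_eq_iteratedFDeriv,
    iteratedFDerivWithin_of_isOpen n hs hx]

private lemma hasDerivAt_iter' {f : ℝ → ℝ} {s : Set ℝ} (hs : IsOpen s)
    (hf : ContDiffOn ℝ (⊤ : ℕ∞) f s) {x : ℝ} (hx : x ∈ s) (k : ℕ) :
    HasDerivAt (iteratedDeriv k f) (iteratedDeriv (k+1) f x) x := by
  have h1 : DifferentiableWithinAt ℝ (iteratedDerivWithin k f s) s x :=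
    (hf.differentiableOn_iteratedDerivWithin (by exact_mod_cast ENat.coe_lt_top k) hs.uniqueDiffOn) x hx
  have h2 : DifferentiableAt ℝ (iteratedDerivWithin k f s) x :=
    h1.differentiableAt (hs.mem_nhds hx)
  have heq : iteratedDerivWithin k f s =ᶠ[𝓝 x] iteratedDeriv k f :=
    Filter.eventuallyEq_of_mem (hs.mem_nhds hx) (fun y hy => iterderiv_open' hs hy k)
  have hdiff : DifferentiableAt ℝ (iteratedDeriv k f) x := h2.congr_of_eventuallyEq heq.symm
  rw [iteratedDeriv_succ]
  exact hdiff.hasDerivAt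

private lemma aux_smooth' (t r : ℝ) :
    ContDiffOn ℝ (⊤ : ℕ∞) (fun c' : ℝ => Real.cos (t * Real.sqrt (r ^ 2 - c'))) (Iio (r^2)) := by
  intro x hx
  have hne : r ^ 2 - x ≠ 0 := sub_ne_zero.2 (ne_of_gt hx)
  have h1 : ContDiffAt ℝ (⊤ : ℕ∞) (fun c' : ℝ => r ^ 2 - c') x := by fun_prop
  have h2 : ContDiffAt ℝ (⊤ : ℕ∞) (fun c' : ℝ => Real.sqrt (r ^ 2 - c')) x := h1.sqrt hne
  exact ((Real.contDiff_cos.contDiffAt).comp x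
    ((contDiffAt_const (c := t)).mul h2)).contDiffWithinAt

private lemma aux_d1' (t r x : ℝ) (hx : x < r^2) :
    HasDerivAt (fun c' : ℝ => Real.cos (t * Real.sqrt (r ^ 2 - c')))
      (t * Real.sin (t * Real.sqrt (r ^ 2 - x)) / (2 * Real.sqrt (r ^ 2 - x))) x := by
  have hne : r ^ 2 - x ≠ 0 := sub_ne_zero.2 (ne_of_gt hx)
  have hpos : 0 < Real.sqrt (r ^ 2 - x) := Real.sqrt_pos.2 (by linarith)
  have h1 : HasDerivAt (fun c' : ℝ => r ^ 2 - c') (-1) x := by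
    simpa using (hasDerivAt_id x).const_sub (r ^ 2)
  have h4 := ((h1.sqrt hne).const_mul t).cos
  convert h4 using 1
  field_simp

private lemma aux_d2' (t r x : ℝ) (hx : x < r^2) :
    HasDerivAt (fun y : ℝ => t * Real.sin (t * Real.sqrt (r ^ 2 - y)) / (2 * Real.sqrt (r ^ 2 - y)))
      ((1/(4*(r^2-x))) * (-(t^2) * Real.cos (t * Real.sqrt (r ^ 2 - x))
        + 2 * (2*(0:ℝ)+1) * (t * Real.sin (t * Real.sqrt (r ^ 2 - x)) / (2 * Real.sqrt (r ^ 2 - x))))) x := by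
  have hne : r ^ 2 - x ≠ 0 := sub_ne_zero.2 (ne_of_gt hx)
  have hpos : 0 < Real.sqrt (r ^ 2 - x) := Real.sqrt_pos.2 (by linarith)
  have hs2 : Real.sqrt (r ^ 2 - x) ^ 2 = r ^ 2 - x := Real.sq_sqrt (by linarith)
  have h1 : HasDerivAt (fun c' : ℝ => r ^ 2 - c') (-1) x := by
    simpa using (hasDerivAt_id x).const_sub (r ^ 2)
  have h2 := h1.sqrt hne
  have hnum := (((h1.sqrt hne).const_mul t).sin).const_mul t
  have hden := h2.const_mul 2
  have hdne : 2 * Real.sqrt (r ^ 2 - x) ≠ 0 := by positivity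
  have h := hnum.div hden hdne
  refine h.congr_deriv ?_
  rw [← hs2]
  have hsne : Real.sqrt (r ^ 2 - x) ≠ 0 := ne_of_gt hpos
  field_simp
  simp only [Real.sqrt_sq hpos.le]
  ring

private lemma main_rec' (t r : ℝ) : ∀ k : ℕ, ∀ x : ℝ, x < r^2 →
    iteratedDeriv (k+2) (fun c' : ℝ => Real.cos (t * Real.sqrt (r ^ 2 - c'))) x
      = (1/(4*(r^2-x))) *
          (-(t^2) * iteratedDeriv k (fun c' : ℝ => Real.cos (t * Real.sqrt (r ^ 2 - c'))) x
            + 2 * (2*(k:ℝ)+1) * iteratedDeriv (k+1) (fun c' : ℝ => Real.cos (t * Real.sqrt (r ^ 2 - c'))) x) := by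
  set f : ℝ → ℝ := fun c' : ℝ => Real.cos (t * Real.sqrt (r ^ 2 - c')) with hf
  intro k
  induction k with
  | zero =>
    intro x hx
    have hmem : Iio (r^2) ∈ 𝓝 x := isOpen_Iio.mem_nhds hx
    have heq1 : deriv f =ᶠ[𝓝 x]
        (fun y : ℝ => t * Real.sin (t * Real.sqrt (r ^ 2 - y)) / (2 * Real.sqrt (r ^ 2 - y))) :=
      Filter.eventuallyEq_of_mem hmem (fun y hy => (aux_d1' t r y hy).deriv)
    have h2 : iteratedDeriv 2 f x = deriv (deriv f) x := by
      rw [show (2:ℕ) = 0 + 1 + 1 from rfl, iteratedDeriv_succ, iteratedDeriv_succ,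
        iteratedDeriv_zero]
    rw [h2, heq1.deriv_eq, (aux_d2' t r x hx).deriv, iteratedDeriv_zero,
      show (0:ℕ)+1 = 1 from rfl, iteratedDeriv_one, (aux_d1' t r x hx).deriv]
    norm_num
    exact Or.inl (Or.inl rfl)
  | succ k IH =>
    intro x hx
    have hmem : Iio (r^2) ∈ 𝓝 x := isOpen_Iio.mem_nhds hx
    have hne : r ^ 2 - x ≠ 0 := sub_ne_zero.2 (ne_of_gt hx)
    have h4ne : 4 * (r ^ 2 - x) ≠ 0 := by simpa using hne
    have hA : HasDerivAt (fun y : ℝ => 1/(4*(r^2-y))) (4/(4*(r^2-x))^2) x := by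
      have hden : HasDerivAt (fun y : ℝ => 4*(r^2-y)) (4 * (-1)) x :=
        (by simpa using (hasDerivAt_id x).const_sub (r ^ 2) :
          HasDerivAt (fun y : ℝ => r^2 - y) (-1) x).const_mul 4
      have := (hasDerivAt_const x (1:ℝ)).div hden h4ne
      refine this.congr_deriv ?_
      ring
    have hBk := hasDerivAt_iter' isOpen_Iio (aux_smooth' t r) (show x ∈ Iio (r^2) from hx) k
    have hBk1 := hasDerivAt_iter' isOpen_Iio (aux_smooth' t r) (show x ∈ Iio (r^2) from hx) (k+1)
    have hB : HasDerivAt (fun y : ℝ => -(t^2) * iteratedDeriv k f y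
          + 2 * (2*(k:ℝ)+1) * iteratedDeriv (k+1) f y)
        (-(t^2) * iteratedDeriv (k+1) f x + 2 * (2*(k:ℝ)+1) * iteratedDeriv (k+2) f x) x :=
      (hBk.const_mul (-(t^2))).add (hBk1.const_mul (2 * (2*(k:ℝ)+1)))
    have hAB : HasDerivAt (fun y : ℝ => 1/(4*(r^2-y)) * (-(t^2) * iteratedDeriv k f y
          + 2 * (2*(k:ℝ)+1) * iteratedDeriv (k+1) f y)) _ x := hA.mul hB
    have heq : iteratedDeriv (k+2) f =ᶠ[𝓝 x]
        (fun y : ℝ => (1/(4*(r^2-y))) * (-(t^2) * iteratedDeriv k f y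
          + 2 * (2*(k:ℝ)+1) * iteratedDeriv (k+1) f y)) :=
      Filter.eventuallyEq_of_mem hmem (fun y hy => IH y hy)
    have h3 : iteratedDeriv (k+1+2) f x = deriv (iteratedDeriv (k+2) f) x := by
      rw [show k+1+2 = (k+2)+1 from rfl, iteratedDeriv_succ]
    rw [h3, heq.deriv_eq, hAB.deriv, IH x hx]
    push_cast
    field_simp
    ring

/-- Recurrence relation for `F_k(r,c,t)`, the `k`-th derivative in `c` of
`cos(t·√(r²−c))`:  for `k ≥ 2`,
`F_k = (1/(4(r²−c)))·(−t² F_{k−2} + 2(2k−3) F_{k−1})`. -/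
theorem stmt_8 (t r c : ℝ) (hc : c < r ^ 2) (k : ℕ) (hk : 2 ≤ k) :
    iteratedDeriv k (fun c' : ℝ => Real.cos (t * Real.sqrt (r ^ 2 - c'))) c
      = (1 / (4 * (r ^ 2 - c))) *
          (-(t ^ 2) * iteratedDeriv (k - 2) (fun c' : ℝ => Real.cos (t * Real.sqrt (r ^ 2 - c'))) c
            + 2 * (2 * (k : ℝ) - 3) *
              iteratedDeriv (k - 1) (fun c' : ℝ => Real.cos (t * Real.sqrt (r ^ 2 - c'))) c) := by
  obtain ⟨m, rfl⟩ := Nat.exists_eq_add_of_le hk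
  rw [show 2 + m - 2 = m from by omega, show 2 + m - 1 = m + 1 from by omega,
    show 2 + m = m + 2 from by omega, main_rec' t r m c hc]
  push_cast
  ring
end

section
/- Let k ∈ ℕ with k ≥ 1 and let t > 0. Then r^{2k−1}·F_k(r,0,t) tends to 0 as r tends to 0 from the right. -/
open Filter Topology Nat

namespace Stmt9Aux

open Nat in
lemma fact_cast_pos (n : ℕ) : (0:ℝ) < (n)! := by exact_mod_cast Nat.factorial_pos _

noncomputable def coef (t : ℝ) (n : ℕ) : ℝ := (-t ^ 2) ^ n / (2 * n)!

lemma abs_coef (t : ℝ) (n : ℕ) : ‖coef t n‖ = (t ^ 2) ^ n / (2 * n)! := by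
  have h1 : (0:ℝ) ≤ (t ^ 2) ^ n := by positivity
  have h2 : (0:ℝ) < (2 * n)! := by exact_mod_cast Nat.factorial_pos _
  rw [coef, norm_div, norm_pow, norm_neg, norm_pow]
  rw [Real.norm_eq_abs, Real.norm_eq_abs, abs_of_nonneg h2.le, sq_abs]

lemma coef_ne_zero {t : ℝ} (ht : t ≠ 0) (n : ℕ) : coef t n ≠ 0 := by
  have h2 : ((2 * n)! : ℝ) ≠ 0 := by exact_mod_cast (Nat.factorial_pos _).ne'
  exact div_ne_zero (pow_ne_zero _ (by simpa using pow_ne_zero 2 ht)) h2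

lemma ratio_tendsto {t : ℝ} (ht : t ≠ 0) :
    Tendsto (fun n ↦ ‖coef t (n + 1)‖ / ‖coef t n‖) atTop (𝓝 0) := by
  have hb : Tendsto (fun n : ℕ ↦ t ^ 2 / (n + 1 : ℝ)) atTop (𝓝 0) :=
    tendsto_const_nhds.div_atTop (tendsto_atTop_add_const_right atTop 1 tendsto_natCast_atTop_atTop)
  refine squeeze_zero (fun n ↦ by positivity) (fun n ↦ ?_) hb
  have h2 : (0:ℝ) < (2 * n)! := by exact_mod_cast Nat.factorial_pos _
  have h3 : (0:ℝ) < (2 * (n + 1))! := by exact_mod_cast Nat.factorial_pos _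
  have ht2 : (0:ℝ) < t ^ 2 := by positivity
  have hnum : ‖coef t n‖ > 0 := by
    rw [abs_coef]; positivity
  have hn1 : (0:ℝ) < (n:ℝ) + 1 := by positivity
  have hfac : ((2 * (n + 1))! : ℝ) = (2 * n + 2) * ((2 * n + 1) * (2 * n)!) := by
    have : 2 * (n + 1) = (2 * n + 1) + 1 := by ring
    rw [this, Nat.factorial_succ, Nat.factorial_succ]
    push_cast; ring
  rw [div_le_div_iff₀ hnum hn1, abs_coef, abs_coef, div_mul_eq_mul_div, mul_div_assoc',
    div_le_div_iff₀ h3 h2, hfac]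
  have hA : (0:ℝ) ≤ (t ^ 2) ^ n * t ^ 2 * (2 * n)! := by positivity
  have h4 : ((n:ℝ) + 1) ≤ (2 * n + 2) * (2 * n + 1) := by
    nlinarith [Nat.cast_nonneg (α := ℝ) n]
  rw [pow_succ]
  nlinarith [mul_le_mul_of_nonneg_left h4 hA]

noncomputable def g (t : ℝ) : ℝ → ℝ := FormalMultilinearSeries.ofScalarsSum (E := ℝ) (coef t)

lemma radius_top {t : ℝ} (ht : t ≠ 0) :
    (FormalMultilinearSeries.ofScalars ℝ (coef t)).radius = ⊤ :=
  FormalMultilinearSeries.ofScalars_radius_eq_top_of_tendsto ℝ _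
    (Eventually.of_forall (coef_ne_zero ht)) (ratio_tendsto ht)

lemma g_analytic {t : ℝ} (ht : t ≠ 0) (x : ℝ) : AnalyticAt ℝ (g t) x := by
  have hb : HasFPowerSeriesOnBall (g t) (FormalMultilinearSeries.ofScalars ℝ (coef t)) 0
      (FormalMultilinearSeries.ofScalars ℝ (coef t)).radius :=
    (FormalMultilinearSeries.ofScalars ℝ (coef t)).hasFPowerSeriesOnBall
      (by rw [radius_top ht]; exact ENNReal.zero_lt_top)
  exact hb.analyticAt_of_mem (by simp [radius_top ht, EMetric.mem_ball, edist_lt_top])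

lemma g_contDiff {t : ℝ} (ht : t ≠ 0) : ContDiff ℝ (⊤ : ℕ∞) (g t) :=
  contDiff_iff_contDiffAt.2 fun x ↦ (g_analytic ht x).contDiffAt

lemma g_eq {t : ℝ} (x : ℝ) (hx : 0 ≤ x) : g t x = Real.cos (t * Real.sqrt x) := by
  rw [g, FormalMultilinearSeries.ofScalars_sum_eq, ← (Real.hasSum_cos (t * Real.sqrt x)).tsum_eq]
  refine tsum_congr fun n ↦ ?_
  rw [coef, smul_eq_mul]
  rw [mul_pow, pow_mul, pow_mul, Real.sq_sqrt hx, neg_pow (t ^ 2)]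
  ring

end Stmt9Aux

/-- `r^{2k−1}·F_k(r,0,t) → 0` as `r → 0⁺`, where `F_k(r,0,t)` is the `k`-th
derivative at `c = 0` of `c ↦ cos(t·√(r²−c))`. -/
theorem stmt_9 (k : ℕ) (hk : 1 ≤ k) (t : ℝ) (ht : 0 < t) :
    Filter.Tendsto
      (fun r : ℝ =>
        r ^ (2 * k - 1) *
          iteratedDeriv k (fun c : ℝ => Real.cos (t * Real.sqrt (r ^ 2 - c))) 0)
      (nhdsWithin 0 (Set.Ioi 0)) (nhds 0) := by
  have htne : t ≠ 0 := ht.ne'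
  set g := Stmt9Aux.g t with hgdef
  have hH : Continuous (iteratedDeriv k g) :=
    (Stmt9Aux.g_contDiff htne).continuous_iteratedDeriv k (by exact_mod_cast le_top)
  set phi : ℝ → ℝ := fun r ↦ r ^ (2 * k - 1) * ((-1 : ℝ) ^ k * iteratedDeriv k g (r ^ 2)) with hphi
  have hphicont : Continuous phi :=
    (continuous_pow _).mul (continuous_const.mul (hH.comp (continuous_pow 2)))
  have hphi0 : phi 0 = 0 := by
    have : (0:ℝ) ^ (2 * k - 1) = 0 := by
      apply zero_pow
      omega
    simp [hphi, this]
  have hlim : Tendsto phi (𝓝[>] (0:ℝ)) (𝓝 0) := by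
    have h : Tendsto phi (𝓝[>] (0:ℝ)) (𝓝 (phi 0)) :=
      (hphicont.continuousAt.continuousWithinAt).tendsto
    rwa [hphi0] at h
  refine hlim.congr' ?_
  filter_upwards [self_mem_nhdsWithin] with r hr
  have hr0 : (0:ℝ) < r := hr
  have hr2 : (0:ℝ) < r ^ 2 := by positivity
  have h1 : (fun c : ℝ => g (r ^ 2 - c)) =ᶠ[𝓝 (0:ℝ)]
      (fun c : ℝ => Real.cos (t * Real.sqrt (r ^ 2 - c))) := by
    filter_upwards [Iio_mem_nhds hr2] with c hc
    exact Stmt9Aux.g_eq _ (sub_pos.2 (Set.mem_Iio.mp hc)).le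
  have h2 : iteratedDeriv k (fun c : ℝ => Real.cos (t * Real.sqrt (r ^ 2 - c))) 0
      = (-1 : ℝ) ^ k * iteratedDeriv k g (r ^ 2) := by
    rw [← h1.iteratedDeriv_eq k]
    have h4 : iteratedDeriv k (fun c : ℝ => g (r ^ 2 - c)) 0
        = ((-1:ℝ) ^ k) • iteratedDeriv k (fun x : ℝ => g (r ^ 2 + x)) (-0) := by
      simp only [sub_eq_add_neg]
      exact iteratedDeriv_comp_neg k (fun x : ℝ => g (r ^ 2 + x)) 0
    rw [h4, iteratedDeriv_comp_const_add]
    simp [smul_eq_mul]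
  rw [hphi]
  simp only [h2]
end

section
/- Let k ∈ ℕ with k ≥ 1 and let t > 0. Then F_k(r,0,t) tends to t^{2k}/(2^k·(2k−1)!!) as r tends to 0 from the right, where (2k−1)!! = 1·3·5···(2k−1) is the double factorial. -/
open scoped Nat

open Filter FormalMultilinearSeries

/-- `F_k(r,0,t) → t^{2k}/(2^k·(2k−1)!!)` as `r → 0⁺`, where `F_k(r,0,t)` is the
`k`-th derivative at `c = 0` of `c ↦ cos(t·√(r²−c))`. -/
theorem stmt_11 (k : ℕ) (hk : 1 ≤ k) (t : ℝ) (ht : 0 < t) :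
    Filter.Tendsto
      (fun r : ℝ => iteratedDeriv k (fun c : ℝ => Real.cos (t * Real.sqrt (r ^ 2 - c))) 0)
      (nhdsWithin 0 (Set.Ioi 0))
      (nhds (t ^ (2 * k) / (2 ^ k * ((2 * k - 1)‼ : ℕ)))) := by
  classical
  -- the entire function `g` with `g x = cos (t √x)` for `x ≥ 0`
  set a : ℕ → ℝ := fun n => (-1) ^ n * t ^ (2 * n) / (2 * n)! with ha
  have ha_ne : ∀ n, a n ≠ 0 := by
    intro n
    have h1 : ((2 * n)! : ℝ) ≠ 0 := Nat.cast_ne_zero.mpr (Nat.factorial_ne_zero _)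
    have h2 : t ^ (2 * n) ≠ 0 := pow_ne_zero _ ht.ne'
    have h3 : ((-1 : ℝ)) ^ n ≠ 0 := pow_ne_zero _ (by norm_num)
    exact div_ne_zero (mul_ne_zero h3 h2) h1
  have hnorm : ∀ n, ‖a n‖ = t ^ (2 * n) / (2 * n)! := by
    intro n
    rw [ha]
    simp only [Real.norm_eq_abs, abs_div, abs_mul, abs_pow, abs_neg, abs_one, one_pow, one_mul,
      abs_of_pos ht, Nat.abs_cast]
  have hratio : Tendsto (fun n => ‖a (n + 1)‖ / ‖a n‖) atTop (nhds 0) := by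
    have heq : ∀ n : ℕ, ‖a (n + 1)‖ / ‖a n‖ = t ^ 2 / ((2 * n + 1) * (2 * n + 2)) := by
      intro n
      rw [hnorm, hnorm]
      have hfac : ((2 * (n + 1))! : ℝ) = (2 * n + 2) * ((2 * n + 1) * (2 * n)!) := by
        have : 2 * (n + 1) = 2 * n + 1 + 1 := by ring
        rw [this, Nat.factorial_succ, Nat.factorial_succ]
        push_cast
        ring
      have hpow : t ^ (2 * (n + 1)) = t ^ (2 * n) * t ^ 2 := by
        rw [← pow_add]; ring_nf
      have h1 : ((2 * n)! : ℝ) ≠ 0 := Nat.cast_ne_zero.mpr (Nat.factorial_ne_zero _)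
      have h2 : t ^ (2 * n) ≠ 0 := pow_ne_zero _ ht.ne'
      have h3 : (2 * (n : ℝ) + 1) ≠ 0 := by positivity
      have h4 : (2 * (n : ℝ) + 2) ≠ 0 := by positivity
      rw [hfac, hpow]
      field_simp
    rw [tendsto_congr heq]
    have hb : Tendsto (fun n : ℕ => t ^ 2 / (n : ℝ)) atTop (nhds 0) :=
      tendsto_const_div_atTop_nhds_zero_nat _
    refine squeeze_zero' (Eventually.of_forall fun n => by positivity) ?_ hb
    filter_upwards [eventually_ge_atTop 1] with n hn
    have hn' : (1 : ℝ) ≤ (n : ℝ) := by exact_mod_cast hn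
    have hle : ((n : ℝ)) ≤ (2 * n + 1) * (2 * n + 2) := by
      nlinarith [Nat.cast_nonneg (α := ℝ) n]
    exact div_le_div_of_nonneg_left (by positivity) (by linarith) hle
  set p := FormalMultilinearSeries.ofScalars ℝ a with hp
  have hrad : p.radius = ⊤ :=
    ofScalars_radius_eq_top_of_tendsto ℝ a (Eventually.of_forall ha_ne) hratio
  set g := p.sum with hgdef
  have hgball : HasFPowerSeriesOnBall g p 0 p.radius :=
    p.hasFPowerSeriesOnBall (by rw [hrad]; exact ENNReal.zero_lt_top)
  have hgC : ContDiff ℝ (⊤ : ℕ∞) g := by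
    rw [contDiff_iff_contDiffAt]
    intro x
    exact (hgball.analyticAt_of_mem (by rw [hrad]; simp)).contDiffAt
  have hcont : Continuous (iteratedDeriv k g) :=
    hgC.continuous_iteratedDeriv k (by exact_mod_cast le_top)
  -- `g` agrees with the cosine expression on nonnegative reals
  have hgcos : ∀ x : ℝ, 0 ≤ x → g x = Real.cos (t * Real.sqrt x) := by
    intro x hx
    rw [hgdef, Real.cos_eq_tsum]
    refine tsum_congr fun n => ?_
    rw [ofScalars_apply_eq]
    have hsq : Real.sqrt x ^ (2 * n) = x ^ n := by
      rw [pow_mul, Real.sq_sqrt hx]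
    rw [mul_pow, hsq, ha]
    simp only [smul_eq_mul]
    ring
  -- the value of the k-th derivative of g at 0
  have hval : iteratedDeriv k g 0 = (k ! : ℝ) * a k := by
    have h := hgball.factorial_smul (1 : ℝ) k
    rw [iteratedDeriv_eq_iteratedFDeriv, ← h, hp, ofScalars_apply_eq]
    simp [mul_comm]
  -- for each r > 0, rewrite the iterated derivative in terms of g
  have key : ∀ r : ℝ, 0 < r →
      iteratedDeriv k (fun c : ℝ => Real.cos (t * Real.sqrt (r ^ 2 - c))) 0
        = (-1 : ℝ) ^ k • iteratedDeriv k g (r ^ 2) := by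
    intro r hr
    have h1 : (fun c : ℝ => Real.cos (t * Real.sqrt (r ^ 2 - c)))
        =ᶠ[nhds (0 : ℝ)] fun c => g (r ^ 2 - c) := by
      have hmem : Set.Iio (r ^ 2) ∈ nhds (0 : ℝ) := Iio_mem_nhds (by positivity)
      filter_upwards [hmem] with c hc
      rw [hgcos _ (by simp only [Set.mem_Iio] at hc; linarith)]
    rw [Filter.EventuallyEq.iteratedDeriv_eq k h1]
    have h2 : (fun c : ℝ => g (r ^ 2 - c)) = fun c : ℝ => (fun x => g (r ^ 2 + x)) (-c) := by
      funext c; simp [sub_eq_add_neg]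
    rw [h2, iteratedDeriv_comp_neg k (fun x => g (r ^ 2 + x)) 0,
      iteratedDeriv_comp_const_add k g (r ^ 2)]
    simp
  -- the limit computation
  have hlim : Tendsto (fun r : ℝ => (-1 : ℝ) ^ k • iteratedDeriv k g (r ^ 2))
      (nhdsWithin 0 (Set.Ioi 0)) (nhds ((-1 : ℝ) ^ k • iteratedDeriv k g ((0 : ℝ) ^ 2))) := by
    have hc : Continuous fun r : ℝ => (-1 : ℝ) ^ k • iteratedDeriv k g (r ^ 2) :=
      (hcont.comp (continuous_pow 2)).const_smul ((-1 : ℝ) ^ k)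
    exact (hc.tendsto 0).mono_left nhdsWithin_le_nhds
  have hfac : ((2 * k)! : ℕ) = 2 ^ k * k ! * (2 * k - 1)‼ := by
    have h2k : 2 * k - 1 + 1 = 2 * k := by omega
    calc (2 * k)! = (2 * k - 1 + 1)! := by rw [h2k]
      _ = (2 * k - 1 + 1)‼ * (2 * k - 1)‼ := Nat.factorial_eq_mul_doubleFactorial _
      _ = (2 * k)‼ * (2 * k - 1)‼ := by rw [h2k]
      _ = 2 ^ k * k ! * (2 * k - 1)‼ := by rw [Nat.doubleFactorial_two_mul]
  have hvalue : (-1 : ℝ) ^ k • iteratedDeriv k g ((0 : ℝ) ^ 2)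
      = t ^ (2 * k) / (2 ^ k * ((2 * k - 1)‼ : ℕ)) := by
    have h0 : ((0 : ℝ) ^ 2) = 0 := by norm_num
    have hne1 : ((2 * k)! : ℝ) ≠ 0 := Nat.cast_ne_zero.mpr (Nat.factorial_ne_zero _)
    have hne2 : ((2 * k - 1)‼ : ℝ) ≠ 0 := Nat.cast_ne_zero.mpr (Nat.doubleFactorial_pos _).ne'
    have hm1 : (-1 : ℝ) ^ k * (-1 : ℝ) ^ k = 1 := by
      rw [← pow_add, Even.neg_one_pow ⟨k, by ring⟩]
    have hcast : ((2 * k)! : ℝ) = 2 ^ k * (k ! : ℝ) * ((2 * k - 1)‼ : ℕ) := by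
      rw [hfac]; push_cast; ring
    have hkne : (k ! : ℝ) ≠ 0 := Nat.cast_ne_zero.mpr (Nat.factorial_ne_zero _)
    rw [h0, hval]
    simp only [ha, smul_eq_mul]
    have step1 : (-1 : ℝ) ^ k * ((k ! : ℝ) * ((-1) ^ k * t ^ (2 * k) / ((2 * k)! : ℝ)))
        = (k ! : ℝ) * t ^ (2 * k) / ((2 * k)! : ℝ) := by
      rw [show (-1 : ℝ) ^ k * ((k ! : ℝ) * ((-1) ^ k * t ^ (2 * k) / ((2 * k)! : ℝ)))
          = ((-1 : ℝ) ^ k * (-1) ^ k) * ((k ! : ℝ) * t ^ (2 * k) / ((2 * k)! : ℝ)) from by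
          ring, hm1, one_mul]
    rw [step1, hcast]
    field_simp
  refine Tendsto.congr' ?_ (hvalue ▸ hlim)
  filter_upwards [self_mem_nhdsWithin] with r hr
  exact (key r hr).symm
end

section
/- Let k ∈ ℕ₀. (i) There exists a constant C¹_k > 0 such that |∂_a^k (1+G(r,a))^{−1}| ≤ C¹_k r^{2k} for all 0 ≤ r ≤ 1/3 and all 0 ≤ a ≤ 1. (ii) There exists a constant C²_k ≠ 0 such that ∂_a^k (1+G(r,a))^{−1} evaluated at a = 0 equals C²_k r^{2k} for all r ≥ 0. The constants C¹_k and C²_k are independent of r and a. -/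
/-!
The map `a ↦ (1 + √(1 - 4ar²))⁻¹` is `φ (r² a)` with `φ t = (1 + √(1 - 4t))⁻¹`, so its `k`-th
derivative is `r^(2k) φ⁽ᵏ⁾(r² a)`. As `φ` is smooth on `t < 1/4`, `φ⁽ᵏ⁾` is bounded on
`[0, 1/9]`, which gives the estimate. At `t = 0`, differentiating the Catalan relation
`φ = 1/2 + 2tφ²` gives `φ⁽ᵏ⁺¹⁾(0) = 2(k+1) ∑ⱼ (k choose j) φ⁽ʲ⁾(0) φ⁽ᵏ⁻ʲ⁾(0)`, so every
`φ⁽ᵏ⁾(0)` is positive.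
-/

open Filter Topology Set

theorem iteratedDeriv_comp_mul_left {𝕜 F : Type*} [NontriviallyNormedField 𝕜]
    [NormedAddCommGroup F] [NormedSpace 𝕜 F] (n : ℕ) (f : 𝕜 → F) (c x : 𝕜) :
    iteratedDeriv n (fun y => f (c * y)) x = c ^ n • iteratedDeriv n f (c * x) := by
  induction n generalizing x with
  | zero => simp
  | succ n ih =>
    rw [iteratedDeriv_succ, funext ih, deriv_fun_const_smul_field, deriv_comp_mul_left,
      iteratedDeriv_succ, smul_smul, pow_succ]

theorem iteratedDeriv_succ_id_mul_zero {𝕜 : Type*} [NontriviallyNormedField 𝕜] {g : 𝕜 → 𝕜}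
    {k : ℕ} (hg : ContDiffAt 𝕜 (k + 1) g 0) :
    iteratedDeriv (k + 1) (fun t => t * g t) 0 = (k + 1) * iteratedDeriv k g 0 := by
  rw [iteratedDeriv_fun_mul (f := fun t => t) contDiffAt_fun_id hg, Finset.sum_eq_single 1]
  · simp [iteratedDeriv_fun_id_zero]
  · intro i _ hi
    simp [iteratedDeriv_fun_id_zero, hi]
  · intro h; simp at h

noncomputable def catalanHalf (t : ℝ) : ℝ := (1 + Real.sqrt (1 - 4 * t))⁻¹

theorem contDiffAt_catalanHalf {n : WithTop ℕ∞} {t : ℝ} (ht : t < 1 / 4) :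
    ContDiffAt ℝ n catalanHalf t := by
  have hsqrt : ContDiffAt ℝ n (fun t : ℝ => Real.sqrt (1 - 4 * t)) t :=
    (contDiffAt_const.sub (contDiffAt_const.mul contDiffAt_fun_id)).sqrt (by linarith)
  exact (contDiffAt_const.add hsqrt).inv (by positivity)

theorem continuousOn_iteratedDeriv_catalanHalf (k : ℕ) :
    ContinuousOn (iteratedDeriv k catalanHalf) (Iio (1 / 4)) := by
  have hsmooth : ContDiffOn ℝ k catalanHalf (Iio (1 / 4)) := fun _ ht =>
    (contDiffAt_catalanHalf ht).contDiffWithinAt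
  exact (hsmooth.continuousOn_iteratedDerivWithin le_rfl isOpen_Iio.uniqueDiffOn).congr
    (iteratedDerivWithin_of_isOpen isOpen_Iio).symm

/-- `2 * catalanHalf` is the Catalan generating function `c`, and this is `c = 1 + t c²`. -/
theorem catalanHalf_functional_eq (t : ℝ) (ht : t ≤ 1 / 4) :
    catalanHalf t = 1 / 2 + 2 * (t * catalanHalf t ^ 2) := by
  have hy := Real.sq_sqrt (show 0 ≤ 1 - 4 * t by linarith)
  have hpos : 0 < 1 + Real.sqrt (1 - 4 * t) := by positivity
  unfold catalanHalf
  field_simp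
  linear_combination -hy

theorem iteratedDeriv_succ_catalanHalf_zero (k : ℕ) :
    iteratedDeriv (k + 1) catalanHalf 0 = 2 * (k + 1) * ∑ j ∈ Finset.range (k + 1),
      k.choose j * iteratedDeriv j catalanHalf 0 * iteratedDeriv (k - j) catalanHalf 0 := by
  have hnear : catalanHalf =ᶠ[𝓝 0] fun t => 1 / 2 + 2 * (t * catalanHalf t ^ 2) := by
    filter_upwards [Iic_mem_nhds (by norm_num : (0:ℝ) < 1 / 4)] with t ht
    exact catalanHalf_functional_eq t ht
  have hsmooth : ContDiffAt ℝ (k + 1) catalanHalf 0 := contDiffAt_catalanHalf (by norm_num)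
  rw [hnear.iteratedDeriv_eq, iteratedDeriv_const_add k.succ_pos, iteratedDeriv_const_mul_field,
    iteratedDeriv_succ_id_mul_zero (hsmooth.pow 2)]
  simp_rw [pow_two]
  have hsmooth' : ContDiffAt ℝ k catalanHalf 0 := hsmooth.of_le (by norm_cast; omega)
  rw [iteratedDeriv_fun_mul hsmooth' hsmooth']
  ring

theorem iteratedDeriv_catalanHalf_zero_pos (k : ℕ) : 0 < iteratedDeriv k catalanHalf 0 := by
  induction k using Nat.strong_induction_on with
  | _ k ih =>
    rcases k with _ | k
    · norm_num [catalanHalf]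
    rw [iteratedDeriv_succ_catalanHalf_zero]
    have hsum : 0 < ∑ j ∈ Finset.range (k + 1),
        k.choose j * iteratedDeriv j catalanHalf 0 * iteratedDeriv (k - j) catalanHalf 0 := by
      refine Finset.sum_pos (fun j hj => ?_) Finset.nonempty_range_add_one
      have hj : j ≤ k := Finset.mem_range_succ_iff.mp hj
      have := Nat.choose_pos hj
      have := ih j (by omega)
      have := ih (k - j) (by omega)
      positivity
    positivity

/-- Estimates and exact form of the `k`-th derivative in `a` of
`a ↦ (1+√(1−4ar²))⁻¹`. -/
theorem stmt_12 (k : ℕ) :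
    (∃ C : ℝ, 0 < C ∧ ∀ r ∈ Set.Icc (0:ℝ) (1/3), ∀ a ∈ Set.Icc (0:ℝ) 1,
      |iteratedDeriv k (fun a' : ℝ => (1 + Real.sqrt (1 - 4 * a' * r ^ 2))⁻¹) a|
        ≤ C * r ^ (2 * k)) ∧
    (∃ C : ℝ, C ≠ 0 ∧ ∀ r : ℝ, 0 ≤ r →
      iteratedDeriv k (fun a' : ℝ => (1 + Real.sqrt (1 - 4 * a' * r ^ 2))⁻¹) 0
        = C * r ^ (2 * k)) := by
  have hscale (r a : ℝ) :
      iteratedDeriv k (fun a' : ℝ => (1 + Real.sqrt (1 - 4 * a' * r ^ 2))⁻¹) a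
        = iteratedDeriv k catalanHalf (r ^ 2 * a) * r ^ (2 * k) := by
    have hcomp : (fun a' : ℝ => (1 + Real.sqrt (1 - 4 * a' * r ^ 2))⁻¹)
        = fun a' => catalanHalf (r ^ 2 * a') := by
      funext a'; unfold catalanHalf; ring_nf
    rw [hcomp, iteratedDeriv_comp_mul_left, smul_eq_mul, pow_mul, mul_comm]
  constructor
  · obtain ⟨C, hC⟩ := isCompact_Icc.exists_bound_of_continuousOn
      ((continuousOn_iteratedDeriv_catalanHalf k).mono
        (Icc_subset_Iio_iff (by norm_num) |>.mpr (by norm_num) : Icc (0:ℝ) (1 / 9) ⊆ _))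
    refine ⟨max C 1, by positivity, fun r ⟨hr0, hr1⟩ a ⟨ha0, ha1⟩ => ?_⟩
    have hra : r ^ 2 * a ∈ Icc (0:ℝ) (1 / 9) :=
      ⟨by positivity, by nlinarith [mul_le_mul hr1 hr1 hr0 (by norm_num : (0:ℝ) ≤ 1 / 3)]⟩
    rw [hscale, abs_mul, abs_of_nonneg (pow_nonneg hr0 (2 * k))]
    gcongr
    exact (Real.norm_eq_abs _ ▸ hC _ hra).trans (le_max_left _ _)
  · refine ⟨_, (iteratedDeriv_catalanHalf_zero_pos k).ne', fun r _ => ?_⟩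
    rw [hscale, mul_zero]
end

section
/- Let k ∈ ℕ with k ≥ 1. (i) There exists a constant C > 0 such that |∂_a^k g(r,a,t)| ≤ C r^{2k} e^{−tr²} Σ_{j=1}^{k} (tr²)^j for all 0 ≤ r ≤ 1/3, all 0 ≤ a ≤ 1 and all t > 0. (ii) There exist constants c_1, …, c_k such that ∂_a^k g(r,a,t) evaluated at a = 0 equals r^{2k} e^{−tr²} Σ_{j=1}^{k} c_j (tr²)^j for all r ≥ 0 and all t > 0. The constants C and c_1, …, c_k are independent of r, a and t. -/
/-!
With `w = t r²` and `x = a r²` one has `g(r,a,t) = exp (w · h x)` for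
`h x = -2 / (1 + √(1 - 4x))` (`gExponent`), which is smooth on `x < 1/4`. Differentiating `k` times
in `a` produces the factor `r^{2k}`, and `(d/dx)ᵏ exp (w · h) = exp (w · h) · ∑_{1 ≤ j ≤ k} w^j P_{k,j}`
with smooth `P_{k,j}` that do not depend on `w` (`expDerivCoeff`). At `x = 0` we have `h = -1`,
which gives (ii) with `c_j = P_{k,j}(0)`; on `0 ≤ x ≤ 1/9` we have `h ≤ -1` and the `P_{k,j}` are
bounded by compactness, which gives (i).
-/

open Real Finset
open scoped ContDiff

/-- The coefficient of `w ^ j` in `exp (-w φ) · (d/dx)ᵏ exp (w φ)`; the recursion is the product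
rule. -/
noncomputable def expDerivCoeff (φ : ℝ → ℝ) : ℕ → ℕ → ℝ → ℝ
  | 0, j => fun _ => if j = 0 then 1 else 0
  | k + 1, 0 => deriv (expDerivCoeff φ k 0)
  | k + 1, j + 1 => fun x => deriv φ x * expDerivCoeff φ k j x + deriv (expDerivCoeff φ k (j + 1)) x

namespace expDerivCoeff

variable {φ : ℝ → ℝ}

lemma zero_right {k : ℕ} (hk : k ≠ 0) : expDerivCoeff φ k 0 = 0 := by
  induction k with
  | zero => exact absurd rfl hk
  | succ k ih =>
    rcases Nat.eq_zero_or_pos k with rfl | hk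
    · funext x; simp [expDerivCoeff]
    · rw [expDerivCoeff, ih hk.ne']; exact deriv_const' 0

lemma eq_zero_of_lt {k j : ℕ} (h : k < j) : expDerivCoeff φ k j = 0 := by
  induction k generalizing j with
  | zero => funext x; simp [expDerivCoeff, h.ne']
  | succ k ih =>
    obtain ⟨j, rfl⟩ := Nat.exists_eq_add_one.mpr (Nat.zero_lt_of_lt h)
    funext x
    simp [expDerivCoeff, ih (Nat.lt_of_succ_lt_succ h), ih (Nat.lt_of_succ_lt h)]

lemma contDiffOn {U : Set ℝ} (hU : IsOpen U) (hφ : ContDiffOn ℝ ∞ φ U) (k j : ℕ) :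
    ContDiffOn ℝ ∞ (expDerivCoeff φ k j) U := by
  induction k generalizing j with
  | zero => exact contDiffOn_const
  | succ k ih =>
    have hderiv (i : ℕ) : ContDiffOn ℝ ∞ (deriv (expDerivCoeff φ k i)) U :=
      (ih i).deriv_of_isOpen hU le_rfl
    cases j with
    | zero => exact hderiv 0
    | succ j => exact ((hφ.deriv_of_isOpen hU le_rfl).mul (ih j)).add (hderiv (j + 1))

lemma sum_range_succ (w x : ℝ) (k : ℕ) :
    ∑ j ∈ range (k + 2), w ^ j * expDerivCoeff φ (k + 1) j x
      = w * deriv φ x * ∑ j ∈ range (k + 1), w ^ j * expDerivCoeff φ k j x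
        + ∑ j ∈ range (k + 1), w ^ j * deriv (expDerivCoeff φ k j) x := by
  have htop : ∑ j ∈ range (k + 1), w ^ j * deriv (expDerivCoeff φ k j) x
      = ∑ j ∈ range (k + 2), w ^ j * deriv (expDerivCoeff φ k j) x := by
    rw [Finset.sum_range_succ _ (k + 1), eq_zero_of_lt (Nat.lt_succ_self k)]
    simp
  rw [htop, Finset.sum_range_succ', Finset.sum_range_succ' _ (k + 1), mul_sum]
  simp only [expDerivCoeff, mul_add, sum_add_distrib, add_assoc]
  congr 1
  exact sum_congr rfl fun j _ => by ring

end expDerivCoeff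

lemma hasDerivAt_comp_mul_const {f : ℝ → ℝ} {c x : ℝ} (hf : DifferentiableAt ℝ f (x * c)) :
    HasDerivAt (fun a => f (a * c)) (c * deriv f (x * c)) x :=
  (hf.hasDerivAt.comp x (hasDerivAt_mul_const c)).congr_deriv (mul_comm _ _)

theorem iteratedDeriv_exp_mul_comp_mul {φ : ℝ → ℝ} {U : Set ℝ} (hU : IsOpen U)
    (hφ : ContDiffOn ℝ ∞ φ U) (w c : ℝ) (k : ℕ) {x : ℝ} (hx : x * c ∈ U) :
    iteratedDeriv k (fun a => exp (w * φ (a * c))) x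
      = c ^ k * exp (w * φ (x * c)) * ∑ j ∈ range (k + 1), w ^ j * expDerivCoeff φ k j (x * c) := by
  have hV : IsOpen {a : ℝ | a * c ∈ U} := hU.preimage (continuous_mul_const c)
  have hdiff {f : ℝ → ℝ} (hf : ContDiffOn ℝ ∞ f U) {y : ℝ} (hy : y * c ∈ U) :
      DifferentiableAt ℝ f (y * c) :=
    (hf.differentiableOn (by simp)).differentiableAt (hU.mem_nhds hy)
  induction k generalizing x with
  | zero => simp [expDerivCoeff]
  | succ k ih =>
    have hloc : iteratedDeriv k (fun a => exp (w * φ (a * c))) =ᶠ[nhds x] fun a =>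
        c ^ k * exp (w * φ (a * c)) * ∑ j ∈ range (k + 1), w ^ j * expDerivCoeff φ k j (a * c) :=
      Filter.eventuallyEq_of_mem (hV.mem_nhds hx) fun y hy => ih hy
    have hexp := ((hasDerivAt_comp_mul_const (hdiff hφ hx)).const_mul w).exp.const_mul (c ^ k)
    have hsum : HasDerivAt (fun a => ∑ j ∈ range (k + 1), w ^ j * expDerivCoeff φ k j (a * c))
        (c * ∑ j ∈ range (k + 1), w ^ j * deriv (expDerivCoeff φ k j) (x * c)) x := by
      rw [mul_sum]
      exact HasDerivAt.fun_sum fun j _ => ((hasDerivAt_comp_mul_const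
        (hdiff (expDerivCoeff.contDiffOn hU hφ k j) hx)).const_mul (w ^ j)).congr_deriv
          (mul_left_comm _ _ _)
    rw [iteratedDeriv_succ, hloc.deriv_eq, (hexp.fun_mul hsum).deriv, expDerivCoeff.sum_range_succ]
    ring

lemma sum_range_succ_eq_sum_Icc_one {f : ℕ → ℝ} (hf : f 0 = 0) (k : ℕ) :
    ∑ j ∈ range (k + 1), f j = ∑ j ∈ Icc 1 k, f j := by
  rw [Nat.range_succ_eq_Icc_zero, ← add_sum_Ioc_eq_sum_Icc (Nat.zero_le k), hf, zero_add]
  rfl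

lemma abs_sum_pow_mul_le {s : Finset ℕ} {w M : ℝ} {p : ℕ → ℝ} (hw : 0 ≤ w)
    (hp : ∀ j ∈ s, |p j| ≤ M) : |∑ j ∈ s, w ^ j * p j| ≤ M * ∑ j ∈ s, w ^ j := by
  rw [mul_sum]
  refine (abs_sum_le_sum_abs _ _).trans (sum_le_sum fun j hj => ?_)
  rw [abs_mul, abs_of_nonneg (pow_nonneg hw j), mul_comm]
  exact mul_le_mul_of_nonneg_right (hp j hj) (pow_nonneg hw j)

noncomputable def gExponent (x : ℝ) : ℝ := -2 / (1 + √(1 - 4 * x))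

lemma gExponent_zero : gExponent 0 = -1 := by norm_num [gExponent]

lemma gExponent_le_neg_one {x : ℝ} (hx : 0 ≤ x) : gExponent x ≤ -1 := by
  have hs : √(1 - 4 * x) ≤ 1 := Real.sqrt_le_one.mpr (by linarith)
  rw [gExponent, div_le_iff₀ (by positivity)]
  linarith

lemma contDiffOn_gExponent : ContDiffOn ℝ ∞ gExponent (Set.Iio (1 / 4)) := by
  have hsqrt : ContDiffOn ℝ ∞ (fun x : ℝ => √(1 - 4 * x)) (Set.Iio (1 / 4)) :=
    (contDiffOn_const.sub (contDiffOn_const.mul contDiffOn_id)).sqrt fun x hx => by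
      simp only [Set.mem_Iio, id] at hx ⊢; linarith
  exact contDiffOn_const.div (contDiffOn_const.add hsqrt) fun x _ => by positivity

/-- Estimates and exact form of the `k`-th derivative in `a` of
`a ↦ g(r,a,t) = exp(−2tr²/(1+√(1−4ar²)))`. -/
theorem stmt_13 (k : ℕ) (hk : 1 ≤ k) :
    (∃ C : ℝ, 0 < C ∧ ∀ r ∈ Set.Icc (0:ℝ) (1/3), ∀ a ∈ Set.Icc (0:ℝ) 1, ∀ t : ℝ, 0 < t →
      |iteratedDeriv k
          (fun a' : ℝ => Real.exp (-(2 * t * r ^ 2) / (1 + Real.sqrt (1 - 4 * a' * r ^ 2)))) a|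
        ≤ C * r ^ (2 * k) * Real.exp (-t * r ^ 2) * ∑ j ∈ Finset.Icc 1 k, (t * r ^ 2) ^ j) ∧
    (∃ c : ℕ → ℝ, ∀ r : ℝ, 0 ≤ r → ∀ t : ℝ, 0 < t →
      iteratedDeriv k
          (fun a' : ℝ => Real.exp (-(2 * t * r ^ 2) / (1 + Real.sqrt (1 - 4 * a' * r ^ 2)))) 0
        = r ^ (2 * k) * Real.exp (-t * r ^ 2) * ∑ j ∈ Finset.Icc 1 k, c j * (t * r ^ 2) ^ j) := by
  set P := expDerivCoeff gExponent k
  have hderiv (r t a : ℝ) (ha : a * r ^ 2 < 1 / 4) :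
      iteratedDeriv k (fun a' : ℝ => exp (-(2 * t * r ^ 2) / (1 + √(1 - 4 * a' * r ^ 2)))) a
        = r ^ (2 * k) * exp (t * r ^ 2 * gExponent (a * r ^ 2))
          * ∑ j ∈ Icc 1 k, (t * r ^ 2) ^ j * P j (a * r ^ 2) := by
    have hg : (fun a' : ℝ => exp (-(2 * t * r ^ 2) / (1 + √(1 - 4 * a' * r ^ 2))))
        = fun a' => exp (t * r ^ 2 * gExponent (a' * r ^ 2)) := by
      funext a'
      rw [gExponent, ← mul_assoc]
      congr 1
      ring
    rw [hg, iteratedDeriv_exp_mul_comp_mul isOpen_Iio contDiffOn_gExponent _ _ k ha, pow_mul,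
      sum_range_succ_eq_sum_Icc_one (by simp [expDerivCoeff.zero_right (by omega : k ≠ 0)])]
  obtain ⟨M, hM⟩ := (isCompact_Icc (a := (0 : ℝ)) (b := 1 / 9)).exists_bound_of_continuousOn
    (f := fun x => ∑ j ∈ Icc 1 k, |P j x|) <| continuousOn_finsetSum _ fun j _ =>
      ((expDerivCoeff.contDiffOn isOpen_Iio contDiffOn_gExponent k j).continuousOn.mono
        fun x hx => by simp only [Set.mem_Icc, Set.mem_Iio] at hx ⊢; linarith).abs
  refine ⟨⟨max M 1, by positivity, ?_⟩, ⟨fun j => P j 0, fun r _ t _ => ?_⟩⟩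
  · rintro r ⟨hr0, hr⟩ a ⟨ha0, ha1⟩ t ht
    have hx : a * r ^ 2 ∈ Set.Icc (0 : ℝ) (1 / 9) := ⟨by positivity, by nlinarith⟩
    have hw : 0 ≤ t * r ^ 2 := by positivity
    have hP (j : ℕ) (hj : j ∈ Icc 1 k) : |P j (a * r ^ 2)| ≤ max M 1 :=
      calc |P j (a * r ^ 2)| ≤ ∑ i ∈ Icc 1 k, |P i (a * r ^ 2)| :=
            single_le_sum (f := fun i => |P i (a * r ^ 2)|) (fun i _ => abs_nonneg _) hj
        _ ≤ M := (Real.le_norm_self _).trans (hM _ hx)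
        _ ≤ max M 1 := le_max_left _ _
    have hexp : t * r ^ 2 * gExponent (a * r ^ 2) ≤ -t * r ^ 2 := by
      nlinarith [gExponent_le_neg_one hx.1]
    rw [hderiv r t a (by linarith [hx.2]), abs_mul, abs_mul, abs_of_nonneg (by positivity),
      abs_of_pos (exp_pos _), mul_assoc (max M 1)]
    calc r ^ (2 * k) * exp (t * r ^ 2 * gExponent (a * r ^ 2))
          * |∑ j ∈ Icc 1 k, (t * r ^ 2) ^ j * P j (a * r ^ 2)|
        ≤ r ^ (2 * k) * exp (-t * r ^ 2) * (max M 1 * ∑ j ∈ Icc 1 k, (t * r ^ 2) ^ j) := by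
          gcongr
          exact abs_sum_pow_mul_le hw hP
      _ = _ := by ring
  · rw [hderiv r t 0 (by simp), zero_mul, gExponent_zero, mul_neg_one, ← neg_mul]
    simp only [mul_comm (P _ 0)]
end

section
/- Let k ∈ ℕ with k ≥ 1. (i) There exists a constant C > 0 such that |∂_a^k h(r,a,t)| ≤ C r^{2k} e^{−tr²} Σ_{j=0}^{k} (tr²)^j for all 0 ≤ r ≤ 1/3, all 0 ≤ a ≤ 1 and all t > 0. (ii) There exist constants c_0, c_1, …, c_k such that ∂_a^k h(r,a,t) evaluated at a = 0 equals r^{2k} e^{−tr²} Σ_{j=0}^{k} c_j (tr²)^j for all r ≥ 0 and all t > 0. The constants C and c_0, …, c_k are independent of r, a and t. -/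
/-!
Write `ρ = r²`, `z = t r²`, `s = √(1 - 4aρ)`, `x = 1/s`, `y = 1/(1+s)`, so that
`h = x · exp (-2 z y)`. Since `x` and `y` have derivatives that are polynomials in
`ρ, x, y`, the `k`-th derivative of `h` is `h · ρ^k · P_k(z, x, y)` for a fixed real
polynomial `P_k`, whose degree in `z` is at most `k` because only differentiating the
exponential produces a factor `z`. For `r ≤ 1/3` and `0 ≤ a ≤ 1` we have `1/2 ≤ s ≤ 1`, so
`h ≤ 2 e^{-z}` and `(x, y)` stays in a compact set, on which the `z`-coefficients of `P_k`
are bounded: this is (i). At `a = 0` we have `h = e^{-z}` and `(x, y) = (1, 1/2)`: this is (ii).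
-/

open MvPolynomial Finset Real

namespace MvPolynomial

theorem hasDerivAt_eval_comp {𝕜 σ : Type*} [NontriviallyNormedField 𝕜] [Fintype σ]
    (P : MvPolynomial σ 𝕜) {v : 𝕜 → σ → 𝕜} {v' : σ → 𝕜} {a : 𝕜}
    (hv : ∀ i, HasDerivAt (fun b => v b i) (v' i) a) :
    HasDerivAt (fun b => eval (v b) P) (∑ i, eval (v a) (pderiv i P) * v' i) a := by
  classical
  induction P using MvPolynomial.induction_on with
  | C c => simpa using hasDerivAt_const a c
  | add p q hp hq =>
    simp only [map_add, add_mul, sum_add_distrib]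
    exact hp.add hq
  | mul_X p n hp =>
    simp only [map_mul, eval_X, pderiv_mul, pderiv_X, map_add, add_mul, sum_add_distrib,
      Pi.single_apply, mul_ite, mul_one, mul_zero]
    refine (HasDerivAt.mul hp (hv n)).congr_deriv ?_
    simp [sum_mul, mul_right_comm, apply_ite (eval (v a))]

theorem degreeOf_pderiv_le {R σ : Type*} [CommSemiring R] (i j : σ) (P : MvPolynomial σ R) :
    degreeOf i (pderiv j P) ≤ degreeOf i P := by
  classical
  rw [degreeOf_le_iff]
  intro m hm
  rw [P.as_sum, map_sum] at hm
  obtain ⟨v, hv, hmv⟩ := mem_biUnion.mp (support_sum hm)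
  rw [pderiv_monomial] at hmv
  rw [mem_singleton.mp (support_monomial_subset hmv), Finsupp.tsub_apply]
  exact (Nat.sub_le _ _).trans (monomial_le_degreeOf i hv)

theorem eval_cons_eq_sum_range {R : Type*} [CommRing R] {n N : ℕ}
    (P : MvPolynomial (Fin (n + 1)) R) (hP : degreeOf 0 P ≤ N) (z : R) (w : Fin n → R) :
    eval (Fin.cons z w) P =
      ∑ j ∈ range (N + 1), eval w ((finSuccEquiv R n P).coeff j) * z ^ j := by
  rw [eval_eq_eval_mv_eval', Polynomial.eval_eq_sum_range' (n := N + 1)]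
  · simp only [Polynomial.coeff_map]
  · exact (Polynomial.natDegree_map_le).trans_lt
      (by rw [natDegree_finSuccEquiv]; omega)

theorem exists_abs_eval_cons_le {n N : ℕ} (P : MvPolynomial (Fin (n + 1)) ℝ)
    (hP : degreeOf 0 P ≤ N) (B : ℝ) :
    ∃ M, 0 < M ∧ ∀ z, 0 ≤ z → ∀ w : Fin n → ℝ, ‖w‖ ≤ B →
      |eval (Fin.cons z w) P| ≤ M * ∑ j ∈ range (N + 1), z ^ j := by
  set c : ℕ → MvPolynomial (Fin n) ℝ := fun j => (finSuccEquiv ℝ n P).coeff j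
  obtain ⟨M, hM⟩ := (isCompact_closedBall (0 : Fin n → ℝ) B).exists_bound_of_continuousOn
    (f := fun w => ∑ j ∈ range (N + 1), |eval w (c j)|)
    (continuous_finsetSum _ fun j _ => (continuous_eval (c j)).abs).continuousOn
  refine ⟨max M 1, by positivity, fun z hz w hw => ?_⟩
  have hw' : w ∈ Metric.closedBall 0 B := by simpa using hw
  have hc : ∀ j ∈ range (N + 1), |eval w (c j)| ≤ max M 1 := fun j hj =>
    calc |eval w (c j)| ≤ ∑ j ∈ range (N + 1), |eval w (c j)| :=
          single_le_sum (f := fun j => |eval w (c j)|) (fun _ _ => abs_nonneg _) hj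
      _ ≤ M := (le_abs_self _).trans (hM w hw')
      _ ≤ max M 1 := le_max_left _ _
  rw [eval_cons_eq_sum_range P hP, mul_sum]
  refine (abs_sum_le_sum_abs _ _).trans (sum_le_sum fun j hj => ?_)
  rw [abs_mul, abs_of_nonneg (pow_nonneg hz j)]
  exact mul_le_mul_of_nonneg_right (hc j hj) (pow_nonneg hz j)

end MvPolynomial

noncomputable section

/-- The paper's `h(r, a, t)` is `hFun (r ^ 2) (t * r ^ 2) a`. -/
def hFun (ρ z a : ℝ) : ℝ := (√(1 - 4 * a * ρ))⁻¹ * exp (-(2 * z) / (1 + √(1 - 4 * a * ρ)))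

def hCoords (ρ z a : ℝ) : Fin 3 → ℝ := ![z, (√(1 - 4 * a * ρ))⁻¹, (1 + √(1 - 4 * a * ρ))⁻¹]

/-- Chosen so that `(hFun · ρ^k · P(hCoords))' = hFun · ρ^(k+1) · (hPolyStep P)(hCoords)`, from
`h' = ρ h (2x² - 4zxy²)`, `x' = 2ρx³` and `y' = 2ρxy²`. -/
def hPolyStep (P : MvPolynomial (Fin 3) ℝ) : MvPolynomial (Fin 3) ℝ :=
  C 2 * P * X 1 ^ 2 - C 4 * P * X 1 * X 2 ^ 2 * X 0
    + C 2 * pderiv 1 P * X 1 ^ 3 + C 2 * pderiv 2 P * X 1 * X 2 ^ 2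

def hPoly : ℕ → MvPolynomial (Fin 3) ℝ
  | 0 => 1
  | k + 1 => hPolyStep (hPoly k)

theorem degreeOf_hPolyStep_le (P : MvPolynomial (Fin 3) ℝ) :
    degreeOf 0 (hPolyStep P) ≤ degreeOf 0 P + 1 := by
  have h01 : (0 : Fin 3) ≠ 1 := by decide
  have h02 : (0 : Fin 3) ≠ 2 := by decide
  refine (degreeOf_add_le _ _ _).trans <| max_le ((degreeOf_add_le _ _ _).trans <|
    max_le ((degreeOf_sub_le _ _ _).trans <| max_le ?_ ?_) ?_) ?_
  · rw [degreeOf_mul_X_pow_of_ne _ h01]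
    exact (degreeOf_C_mul_le _ _ _).trans (Nat.le_succ _)
  · refine (degreeOf_mul_X_self _ _).trans (Nat.succ_le_succ ?_)
    rw [degreeOf_mul_X_pow_of_ne _ h02, degreeOf_mul_X_of_ne _ h01]
    exact degreeOf_C_mul_le _ _ _
  · rw [degreeOf_mul_X_pow_of_ne _ h01]
    exact (degreeOf_C_mul_le _ _ _).trans ((degreeOf_pderiv_le _ _ _).trans (Nat.le_succ _))
  · rw [degreeOf_mul_X_pow_of_ne _ h02, degreeOf_mul_X_of_ne _ h01]
    exact (degreeOf_C_mul_le _ _ _).trans ((degreeOf_pderiv_le _ _ _).trans (Nat.le_succ _))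

theorem degreeOf_hPoly_le (k : ℕ) : degreeOf 0 (hPoly k) ≤ k := by
  induction k with
  | zero => simp [hPoly]
  | succ k ih => exact (degreeOf_hPolyStep_le _).trans (by omega)

section Derivatives

variable {ρ a : ℝ}

theorem hasDerivAt_sqrt_one_sub (h : 0 < 1 - 4 * a * ρ) :
    HasDerivAt (fun b => √(1 - 4 * b * ρ)) (-(2 * ρ) / √(1 - 4 * a * ρ)) a := by
  have hlin : HasDerivAt (fun b => 1 - 4 * b * ρ) (-(4 * ρ)) a := by
    simpa using (((hasDerivAt_id' a).const_mul 4).mul_const ρ).const_sub 1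
  refine (hlin.sqrt h.ne').congr_deriv ?_
  field_simp
  ring

theorem hasDerivAt_inv_sqrt_one_sub (h : 0 < 1 - 4 * a * ρ) :
    HasDerivAt (fun b => (√(1 - 4 * b * ρ))⁻¹) (2 * ρ * (√(1 - 4 * a * ρ))⁻¹ ^ 3) a := by
  have hs := Real.sqrt_pos.mpr h
  refine ((hasDerivAt_sqrt_one_sub h).inv hs.ne').congr_deriv ?_
  field_simp

theorem hasDerivAt_inv_one_add_sqrt_one_sub (h : 0 < 1 - 4 * a * ρ) :
    HasDerivAt (fun b => (1 + √(1 - 4 * b * ρ))⁻¹)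
      (2 * ρ * (√(1 - 4 * a * ρ))⁻¹ * (1 + √(1 - 4 * a * ρ))⁻¹ ^ 2) a := by
  have hs := Real.sqrt_pos.mpr h
  have hs1 : 1 + √(1 - 4 * a * ρ) ≠ 0 := by positivity
  refine (((hasDerivAt_sqrt_one_sub h).const_add 1).inv hs1).congr_deriv ?_
  field_simp

theorem hasDerivAt_hFun (z : ℝ) (h : 0 < 1 - 4 * a * ρ) :
    HasDerivAt (hFun ρ z)
      (hFun ρ z a * ρ * eval (hCoords ρ z a) (C 2 * X 1 ^ 2 - C 4 * X 1 * X 2 ^ 2 * X 0)) a := by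
  have hexp := ((hasDerivAt_inv_one_add_sqrt_one_sub h).const_mul (-(2 * z))).exp
  refine ((hasDerivAt_inv_sqrt_one_sub h).mul hexp).congr_deriv ?_
  simp only [hFun, hCoords, map_sub, map_mul, map_pow, eval_C, eval_X, Matrix.cons_val_zero,
    Matrix.cons_val_one, Matrix.cons_val_two, Matrix.head_cons, Matrix.tail_cons, div_eq_mul_inv]
  ring

theorem hasDerivAt_eval_hCoords (z : ℝ) (P : MvPolynomial (Fin 3) ℝ) (h : 0 < 1 - 4 * a * ρ) :
    HasDerivAt (fun b => eval (hCoords ρ z b) P)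
      (ρ * eval (hCoords ρ z a) (C 2 * pderiv 1 P * X 1 ^ 3 + C 2 * pderiv 2 P * X 1 * X 2 ^ 2)) a := by
  refine (hasDerivAt_eval_comp P (v' := ![0, 2 * ρ * (√(1 - 4 * a * ρ))⁻¹ ^ 3,
    2 * ρ * (√(1 - 4 * a * ρ))⁻¹ * (1 + √(1 - 4 * a * ρ))⁻¹ ^ 2]) fun i => ?_).congr_deriv ?_
  · fin_cases i
    · exact hasDerivAt_const a z
    · exact hasDerivAt_inv_sqrt_one_sub h
    · exact hasDerivAt_inv_one_add_sqrt_one_sub h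
  · simp [Fin.sum_univ_three, hCoords]
    ring

end Derivatives

theorem iteratedDeriv_hFun (ρ z : ℝ) (k : ℕ) {a : ℝ} (ha : 0 < 1 - 4 * a * ρ) :
    iteratedDeriv k (hFun ρ z) a = hFun ρ z a * ρ ^ k * eval (hCoords ρ z a) (hPoly k) := by
  induction k generalizing a with
  | zero => simp [hPoly]
  | succ k ih =>
    have hopen : IsOpen {b : ℝ | 0 < 1 - 4 * b * ρ} := isOpen_lt continuous_const (by fun_prop)
    have hev : iteratedDeriv k (hFun ρ z) =ᶠ[nhds a]
        fun b => hFun ρ z b * ρ ^ k * eval (hCoords ρ z b) (hPoly k) :=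
      Filter.eventuallyEq_of_mem (hopen.mem_nhds ha) fun b hb => ih hb
    rw [iteratedDeriv_succ, hev.deriv_eq]
    refine HasDerivAt.deriv ((((hasDerivAt_hFun z ha).mul_const (ρ ^ k)).mul
      (hasDerivAt_eval_hCoords z (hPoly k) ha)).congr_deriv ?_)
    simp only [hPoly, hPolyStep, map_add, map_sub, map_mul, map_pow, eval_C, eval_X]
    ring

section Bounds

variable {ρ a : ℝ}

theorem sqrt_one_sub_mem_Icc (h₀ : 0 ≤ a * ρ) (h₁ : a * ρ ≤ 3 / 16) :
    √(1 - 4 * a * ρ) ∈ Set.Icc (1 / 2) 1 := by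
  constructor
  · rw [Real.le_sqrt (by norm_num) (by linarith)]
    linarith
  · rw [Real.sqrt_le_one]
    linarith

theorem abs_hFun_le {z : ℝ} (hz : 0 ≤ z) (h₀ : 0 ≤ a * ρ) (h₁ : a * ρ ≤ 3 / 16) :
    |hFun ρ z a| ≤ 2 * exp (-z) := by
  obtain ⟨hs₀, hs₁⟩ := sqrt_one_sub_mem_Icc h₀ h₁
  have hx : (√(1 - 4 * a * ρ))⁻¹ ≤ 2 := inv_le_of_inv_le₀ (by norm_num) (by linarith)
  have hexp : exp (-(2 * z) / (1 + √(1 - 4 * a * ρ))) ≤ exp (-z) := by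
    rw [exp_le_exp, div_le_iff₀ (by linarith)]
    nlinarith
  rw [hFun, abs_of_nonneg (by positivity)]
  exact mul_le_mul hx hexp (exp_pos _).le (by norm_num)

theorem norm_inv_sqrt_one_sub_le (h₀ : 0 ≤ a * ρ) (h₁ : a * ρ ≤ 3 / 16) :
    ‖![(√(1 - 4 * a * ρ))⁻¹, (1 + √(1 - 4 * a * ρ))⁻¹]‖ ≤ 2 := by
  obtain ⟨hs₀, hs₁⟩ := sqrt_one_sub_mem_Icc h₀ h₁
  rw [pi_norm_le_iff_of_nonneg (by norm_num), Fin.forall_fin_two]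
  simp only [Matrix.cons_val_zero, Matrix.cons_val_one, Real.norm_eq_abs]
  constructor
  · rw [abs_of_pos (by positivity)]
    exact inv_le_of_inv_le₀ (by norm_num) (by linarith)
  · rw [abs_of_pos (by positivity)]
    exact (inv_le_one_of_one_le₀ (by linarith)).trans (by norm_num)

end Bounds

theorem hFun_zero (ρ z : ℝ) : hFun ρ z 0 = exp (-z) := by
  simp only [hFun, mul_zero, zero_mul, sub_zero, Real.sqrt_one, inv_one, one_mul]
  ring_nf

theorem hCoords_zero (ρ z : ℝ) : hCoords ρ z 0 = Fin.cons z ![1, 1 / 2] := by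
  ext i
  fin_cases i <;> norm_num [hCoords]

end

theorem stmt_14_general (k : ℕ) :
    (∃ C : ℝ, 0 < C ∧ ∀ r ∈ Set.Icc (0:ℝ) (1/3), ∀ a ∈ Set.Icc (0:ℝ) 1, ∀ t : ℝ, 0 < t →
      |iteratedDeriv k
          (fun a' : ℝ => (Real.sqrt (1 - 4 * a' * r ^ 2))⁻¹ *
            Real.exp (-(2 * t * r ^ 2) / (1 + Real.sqrt (1 - 4 * a' * r ^ 2)))) a|
        ≤ C * r ^ (2 * k) * Real.exp (-t * r ^ 2) * ∑ j ∈ Finset.range (k + 1), (t * r ^ 2) ^ j) ∧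
    (∃ c : ℕ → ℝ, ∀ r : ℝ, 0 ≤ r → ∀ t : ℝ, 0 < t →
      iteratedDeriv k
          (fun a' : ℝ => (Real.sqrt (1 - 4 * a' * r ^ 2))⁻¹ *
            Real.exp (-(2 * t * r ^ 2) / (1 + Real.sqrt (1 - 4 * a' * r ^ 2)))) 0
        = r ^ (2 * k) * Real.exp (-t * r ^ 2) *
            ∑ j ∈ Finset.range (k + 1), c j * (t * r ^ 2) ^ j) := by
  have hfun : ∀ r t : ℝ, (fun a' : ℝ => (Real.sqrt (1 - 4 * a' * r ^ 2))⁻¹ *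
      Real.exp (-(2 * t * r ^ 2) / (1 + Real.sqrt (1 - 4 * a' * r ^ 2)))) = hFun (r ^ 2) (t * r ^ 2) :=
    fun r t => by ext a'; simp only [hFun, mul_assoc]
  constructor
  · obtain ⟨M, hM, hbound⟩ := exists_abs_eval_cons_le (hPoly k) (degreeOf_hPoly_le k) 2
    refine ⟨2 * M, by positivity, fun r hr a ha t ht => ?_⟩
    have h₀ : 0 ≤ a * r ^ 2 := mul_nonneg ha.1 (sq_nonneg r)
    have h₁ : a * r ^ 2 ≤ 3 / 16 := by nlinarith [ha.1, ha.2, hr.1, hr.2]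
    have hz : 0 ≤ t * r ^ 2 := by positivity
    rw [hfun, iteratedDeriv_hFun _ _ k (by linarith), pow_mul, abs_mul, abs_mul,
      abs_of_nonneg (pow_nonneg (sq_nonneg r) k), neg_mul]
    calc |hFun (r ^ 2) (t * r ^ 2) a| * (r ^ 2) ^ k * |eval (hCoords (r ^ 2) (t * r ^ 2) a) (hPoly k)|
        ≤ 2 * exp (-(t * r ^ 2)) * (r ^ 2) ^ k * (M * ∑ j ∈ range (k + 1), (t * r ^ 2) ^ j) := by
          gcongr
          · exact abs_hFun_le hz h₀ h₁
          · exact hbound _ hz _ (norm_inv_sqrt_one_sub_le h₀ h₁)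
      _ = _ := by ring
  · refine ⟨fun j => eval ![1, 1 / 2] ((finSuccEquiv ℝ 2 (hPoly k)).coeff j), fun r _ t _ => ?_⟩
    rw [hfun, iteratedDeriv_hFun _ _ k (by norm_num), hFun_zero, hCoords_zero,
      eval_cons_eq_sum_range _ (degreeOf_hPoly_le k), pow_mul, neg_mul]
    ring

/-- Estimates and exact form of the `k`-th derivative in `a` of
`a ↦ h(r,a,t) = (1−4ar²)^{−1/2}·exp(−2tr²/(1+√(1−4ar²)))`. -/
theorem stmt_14 (k : ℕ) (hk : 1 ≤ k) :
    (∃ C : ℝ, 0 < C ∧ ∀ r ∈ Set.Icc (0:ℝ) (1/3), ∀ a ∈ Set.Icc (0:ℝ) 1, ∀ t : ℝ, 0 < t →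
      |iteratedDeriv k
          (fun a' : ℝ => (Real.sqrt (1 - 4 * a' * r ^ 2))⁻¹ *
            Real.exp (-(2 * t * r ^ 2) / (1 + Real.sqrt (1 - 4 * a' * r ^ 2)))) a|
        ≤ C * r ^ (2 * k) * Real.exp (-t * r ^ 2) * ∑ j ∈ Finset.range (k + 1), (t * r ^ 2) ^ j) ∧
    (∃ c : ℕ → ℝ, ∀ r : ℝ, 0 ≤ r → ∀ t : ℝ, 0 < t →
      iteratedDeriv k
          (fun a' : ℝ => (Real.sqrt (1 - 4 * a' * r ^ 2))⁻¹ *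
            Real.exp (-(2 * t * r ^ 2) / (1 + Real.sqrt (1 - 4 * a' * r ^ 2)))) 0
        = r ^ (2 * k) * Real.exp (-t * r ^ 2) *
            ∑ j ∈ Finset.range (k + 1), c j * (t * r ^ 2) ^ j) :=
  stmt_14_general k
end

section
/- Let φ : ℝ → ℝ be infinitely differentiable. Then for every k ∈ ℕ, the k-th derivative at s = 0 of the map s ↦ exp(s·φ(s)) equals Σ_{j=0}^{k} (k!/(j!·(k−j)!)) · D_{k−j,j}, where D_{k−j,j} denotes the (k−j)-th derivative at s = 0 of the map s ↦ φ(s)^j. -/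
/-! Auxiliary lemmas -/

private lemma itd_add {f g : ℝ → ℝ} (n : ℕ) (x : ℝ)
    (hf : ContDiff ℝ (⊤ : ℕ∞) f) (hg : ContDiff ℝ (⊤ : ℕ∞) g) :
    iteratedDeriv n (fun s => f s + g s) x = iteratedDeriv n f x + iteratedDeriv n g x := by
  rw [← iteratedDerivWithin_univ, ← iteratedDerivWithin_univ, ← iteratedDerivWithin_univ]
  exact iteratedDerivWithin_add (Set.mem_univ x) uniqueDiffOn_univ
    ((hf.of_le (by exact_mod_cast le_top)).contDiffWithinAt) ((hg.of_le (by exact_mod_cast le_top)).contDiffWithinAt)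

private lemma itd_const_mul {f : ℝ → ℝ} (n : ℕ) (x : ℝ) (c : ℝ) (hf : ContDiff ℝ (⊤ : ℕ∞) f) :
    iteratedDeriv n (fun s => c * f s) x = c * iteratedDeriv n f x := by
  rw [← iteratedDerivWithin_univ, ← iteratedDerivWithin_univ]
  exact iteratedDerivWithin_const_mul (Set.mem_univ x) uniqueDiffOn_univ c
    ((hf.of_le (by exact_mod_cast le_top)).contDiffWithinAt)

private lemma itd_sum {ι : Type*} (t : Finset ι) (f : ι → ℝ → ℝ)
    (hf : ∀ i ∈ t, ContDiff ℝ (⊤ : ℕ∞) (f i)) (n : ℕ) (x : ℝ) :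
    iteratedDeriv n (fun s => ∑ i ∈ t, f i s) x = ∑ i ∈ t, iteratedDeriv n (f i) x := by
  classical
  induction t using Finset.induction with
  | empty =>
    have hz : ∀ m : ℕ, iteratedDeriv m (fun _ : ℝ => (0 : ℝ)) = fun _ => 0 := by
      intro m
      induction m with
      | zero => rfl
      | succ m ihm => rw [iteratedDeriv_succ, ihm]; funext y; simp
    simp [hz n]
  | insert a t' hnot ih =>
    have h1 : ContDiff ℝ (⊤ : ℕ∞) (f a) := hf a (Finset.mem_insert_self a t')
    have h2 : ContDiff ℝ (⊤ : ℕ∞) (fun s => ∑ i ∈ t', f i s) :=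
      ContDiff.sum fun i hi => hf i (Finset.mem_insert_of_mem hi)
    simp only [Finset.sum_insert hnot]
    rw [itd_add n x h1 h2, ih fun i hi => hf i (Finset.mem_insert_of_mem hi)]

/-- `D^n (s ⬝ w) = s ⬝ D^n w + n ⬝ D^{n-1} w`. -/
private lemma itd_id_mul (w : ℝ → ℝ) (hw : ContDiff ℝ (⊤ : ℕ∞) w) : ∀ n : ℕ,
    iteratedDeriv n (fun s => s * w s) =
      fun s => s * iteratedDeriv n w s + (n : ℝ) * iteratedDeriv (n - 1) w s := by
  intro n
  induction n with
  | zero => funext s; simp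
  | succ n ih =>
    funext s
    have hdn : Differentiable ℝ (iteratedDeriv n w) :=
      hw.differentiable_iteratedDeriv n (by exact_mod_cast lt_top_iff_ne_top.2 (by simp))
    have hdn1 : Differentiable ℝ (iteratedDeriv (n - 1) w) :=
      hw.differentiable_iteratedDeriv (n - 1) (by generalize n - 1 = m; exact_mod_cast lt_top_iff_ne_top.2 (by simp))
    rw [iteratedDeriv_succ, ih]
    have hd1 : DifferentiableAt ℝ (fun s : ℝ => s * iteratedDeriv n w s) s :=
      (differentiableAt_id : DifferentiableAt ℝ (fun s : ℝ => s) s).mul (hdn s)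
    have hd2 : DifferentiableAt ℝ (fun s : ℝ => (n : ℝ) * iteratedDeriv (n - 1) w s) s :=
      (hdn1 s).const_mul _
    rw [deriv_fun_add hd1 hd2, deriv_fun_mul (c := fun s : ℝ => s) differentiableAt_id (hdn s), deriv_const_mul _ (hdn1 s)]
    simp only [deriv_id'', one_mul, ← iteratedDeriv_succ]
    rcases Nat.eq_zero_or_pos n with rfl | hn
    · simp [iteratedDeriv_succ]
      ring
    · have : n - 1 + 1 = n := Nat.succ_pred_eq_of_pos hn
      rw [this]
      push_cast
      ring

/-- `D^k (s^j ⬝ v) (0) = (k!/(k-j)!) ⬝ D^{k-j} v (0)` if `j ≤ k`, else `0`. -/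
private lemma itd_pow_mul : ∀ (j k : ℕ) (v : ℝ → ℝ), ContDiff ℝ (⊤ : ℕ∞) v →
    iteratedDeriv k (fun s => s ^ j * v s) 0 =
      if j ≤ k then ((Nat.factorial k : ℝ) / (Nat.factorial (k - j) : ℝ)) * iteratedDeriv (k - j) v 0 else 0 := by
  intro j
  induction j with
  | zero =>
    intro k v hv
    simp only [pow_zero, one_mul, Nat.zero_le, if_true, Nat.sub_zero]
    rw [div_self (by exact_mod_cast k.factorial_ne_zero), one_mul]
  | succ j ih =>
    intro k v hv
    have hw : ContDiff ℝ (⊤ : ℕ∞) (fun s : ℝ => s ^ j * v s) := (contDiff_id.pow j).mul hv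
    have heq : (fun s : ℝ => s ^ (j + 1) * v s) = fun s => s * (s ^ j * v s) := by
      funext s; ring
    rw [heq, itd_id_mul _ hw k]
    simp only [zero_mul, zero_add]
    cases k with
    | zero => simp
    | succ m =>
      have : (m + 1) - 1 = m := rfl
      rw [this, ih m v hv]
      by_cases hjm : j ≤ m
      · rw [if_pos hjm, if_pos (Nat.succ_le_succ hjm)]
        have h1 : m + 1 - (j + 1) = m - j := Nat.succ_sub_succ m j
        rw [h1]
        rw [show (Nat.factorial (m + 1) : ℝ) = (m + 1) * (Nat.factorial m : ℝ) by exact_mod_cast Nat.factorial_succ m]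
        push_cast
        ring
      · rw [if_neg hjm, if_neg (fun h => hjm (Nat.le_of_succ_le_succ h))]
        ring

/-- Formal power series of `x ↦ ∑ xⁿ/(n+k+1)!`. -/
private noncomputable def gSer (k : ℕ) : FormalMultilinearSeries ℝ ℝ ℝ :=
  fun n => ((Nat.factorial (n + k + 1) : ℝ)⁻¹) • ContinuousMultilinearMap.mkPiAlgebraFin ℝ n ℝ

private lemma gSer_norm (k n : ℕ) : ‖gSer k n‖ ≤ (Nat.factorial (n + k + 1) : ℝ)⁻¹ := by
  have h := ContinuousMultilinearMap.opNorm_smul_le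
    (c := ((Nat.factorial (n + k + 1) : ℝ)⁻¹))
    (f := ContinuousMultilinearMap.mkPiAlgebraFin ℝ n ℝ)
  calc ‖gSer k n‖
      ≤ ‖((Nat.factorial (n + k + 1) : ℝ)⁻¹)‖ * ‖ContinuousMultilinearMap.mkPiAlgebraFin ℝ n ℝ‖ :=
        h
    _ = (Nat.factorial (n + k + 1) : ℝ)⁻¹ := by
        rw [ContinuousMultilinearMap.norm_mkPiAlgebraFin, mul_one, Real.norm_eq_abs]
        exact abs_of_nonneg (by positivity)

private lemma gSer_radius (k : ℕ) : (gSer k).radius = ⊤ := by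
  apply FormalMultilinearSeries.radius_eq_top_of_summable_norm
  intro r
  apply Summable.of_nonneg_of_le (fun n => by positivity)
    (fun n => ?_) (Real.summable_pow_div_factorial r)
  have hfac : (Nat.factorial n : ℝ) ≤ (Nat.factorial (n + k + 1) : ℝ) := by
    exact_mod_cast Nat.factorial_le (by omega)
  have h0 : (0 : ℝ) < Nat.factorial n := by positivity
  calc ‖gSer k n‖ * (r : ℝ) ^ n
      ≤ (Nat.factorial (n + k + 1) : ℝ)⁻¹ * (r : ℝ) ^ n :=
        mul_le_mul_of_nonneg_right (gSer_norm k n) (pow_nonneg r.coe_nonneg n)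
    _ ≤ (Nat.factorial n : ℝ)⁻¹ * (r : ℝ) ^ n := by
        apply mul_le_mul_of_nonneg_right _ (pow_nonneg r.coe_nonneg n)
        exact inv_anti₀ h0 hfac
    _ = (r : ℝ) ^ n / Nat.factorial n := by rw [div_eq_mul_inv, mul_comm]

private lemma gSer_contDiff (k : ℕ) : ContDiff ℝ (⊤ : ℕ∞) (gSer k).sum := by
  have h : HasFPowerSeriesOnBall (gSer k).sum (gSer k) 0 (gSer k).radius :=
    (gSer k).hasFPowerSeriesOnBall (by rw [gSer_radius]; exact ENNReal.zero_lt_top)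
  have ha : AnalyticOnNhd ℝ (gSer k).sum Set.univ := by
    intro x _
    exact h.analyticAt_of_mem (by rw [gSer_radius]; simp)
  exact ha.contDiff

private lemma gSer_sum_eq (k : ℕ) (x : ℝ) :
    (gSer k).sum x = ∑' n : ℕ, x ^ n / (Nat.factorial (n + k + 1) : ℝ) := by
  rw [FormalMultilinearSeries.sum]
  congr 1
  funext n
  simp [gSer, List.prod_ofFn, div_eq_inv_mul]

/-- Splitting `exp` into a Taylor polynomial plus `x^(k+1)` times a smooth function. -/
private lemma exp_split (k : ℕ) (x : ℝ) :
    Real.exp x = (∑ j ∈ Finset.range (k + 1), x ^ j / (Nat.factorial j : ℝ))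
      + x ^ (k + 1) * (gSer k).sum x := by
  have hsum : Summable (fun n : ℕ => x ^ n / (Nat.factorial n : ℝ)) := Real.summable_pow_div_factorial x
  have hexp : Real.exp x = ∑' n : ℕ, x ^ n / (Nat.factorial n : ℝ) := by
    rw [Real.exp_eq_exp_ℝ, NormedSpace.exp_eq_tsum_div]
  rw [hexp, ← hsum.sum_add_tsum_nat_add (k + 1)]
  congr 1
  rw [gSer_sum_eq, ← tsum_mul_left]
  congr 1
  funext n
  rw [show n + (k + 1) = n + k + 1 by ring]
  rw [pow_add]
  ring

/-- For smooth `φ : ℝ → ℝ` and `k ≥ 1`,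
`(d^k/ds^k exp(s·φ(s)))|₀ = Σ_{j=0}^k (k!/(j!(k−j)!)) (d^{k−j}/ds^{k−j} φ(s)^j)|₀`. -/
theorem stmt_18 (φ : ℝ → ℝ) (hφ : ContDiff ℝ (⊤ : ℕ∞) φ) (k : ℕ) (hk : 1 ≤ k) :
    iteratedDeriv k (fun s : ℝ => Real.exp (s * φ s)) 0
      = ∑ j ∈ Finset.range (k + 1),
          ((Nat.factorial k : ℝ) / ((Nat.factorial j : ℝ) * (Nat.factorial (k - j)))) *
            iteratedDeriv (k - j) (fun s : ℝ => (φ s) ^ j) 0 := by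
  -- the remainder factor
  set g : ℝ → ℝ := (gSer k).sum with hg
  have hgC : ContDiff ℝ (⊤ : ℕ∞) g := gSer_contDiff k
  set v : ℝ → ℝ := fun s => (φ s) ^ (k + 1) * g (s * φ s) with hv
  have hvC : ContDiff ℝ (⊤ : ℕ∞) v := (hφ.pow (k + 1)).mul (hgC.comp (contDiff_id.mul hφ))
  -- term functions
  set T : ℕ → ℝ → ℝ := fun j s => ((Nat.factorial j : ℝ))⁻¹ * (s ^ j * (φ s) ^ j) with hT
  have hTC : ∀ j, ContDiff ℝ (⊤ : ℕ∞) (T j) := fun j =>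
    contDiff_const.mul ((contDiff_id.pow j).mul (hφ.pow j))
  have key : (fun s : ℝ => Real.exp (s * φ s)) =
      fun s => (∑ j ∈ Finset.range (k + 1), T j s) + s ^ (k + 1) * v s := by
    funext s
    rw [exp_split k (s * φ s)]
    congr 1
    · apply Finset.sum_congr rfl
      intro j _
      rw [hT]
      simp only [mul_pow]
      rw [div_eq_inv_mul]
    · rw [hv, mul_pow]; ring
  rw [key]
  have hsumC : ContDiff ℝ (⊤ : ℕ∞) (fun s : ℝ => ∑ j ∈ Finset.range (k + 1), T j s) :=
    ContDiff.sum fun j _ => hTC j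
  have hremC : ContDiff ℝ (⊤ : ℕ∞) (fun s : ℝ => s ^ (k + 1) * v s) :=
    (contDiff_id.pow (k + 1)).mul hvC
  rw [itd_add k 0 hsumC hremC]
  have hrem : iteratedDeriv k (fun s : ℝ => s ^ (k + 1) * v s) 0 = 0 := by
    rw [itd_pow_mul (k + 1) k v hvC, if_neg (by omega)]
  rw [hrem, add_zero]
  rw [itd_sum (Finset.range (k + 1)) T (fun j _ => hTC j) k 0]
  apply Finset.sum_congr rfl
  intro j hj
  have hjk : j ≤ k := Nat.lt_succ_iff.mp (Finset.mem_range.mp hj)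
  rw [hT]
  have hpows : ContDiff ℝ (⊤ : ℕ∞) (fun s : ℝ => s ^ j * (φ s) ^ j) := (contDiff_id.pow j).mul (hφ.pow j)
  rw [itd_const_mul k 0 _ hpows]
  rw [itd_pow_mul j k (fun s => (φ s) ^ j) (hφ.pow j), if_pos hjk]
  field_simp
end

section
/- Let φ, ψ : ℝ → ℝ be infinitely differentiable. Then for every k ∈ ℕ, the k-th derivative at s = 0 of the map s ↦ ψ(s)·exp(s·φ(s)) equals Σ_{j=0}^{k} Σ_{ℓ=0}^{k−j} (k!/(j!·(k−j−ℓ)!·ℓ!)) · D_{k−j−ℓ,j} · E_ℓ, where D_{k−j−ℓ,j} denotes the (k−j−ℓ)-th derivative at s = 0 of the map s ↦ φ(s)^j and E_ℓ denotes the ℓ-th derivative at s = 0 of ψ. -/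
open Finset Filter
open scoped ContDiff

private lemma smoothID {f : ℝ → ℝ} (hf : ContDiff ℝ ∞ f) (n : ℕ) :
    ContDiff ℝ ∞ (iteratedDeriv n f) := by
  rw [iteratedDeriv_eq_iterate]; exact hf.iterate_deriv n

private lemma iteratedDeriv_add' {f g : ℝ → ℝ} (hf : ContDiff ℝ ∞ f) (hg : ContDiff ℝ ∞ g)
    (n : ℕ) (x : ℝ) :
    iteratedDeriv n (fun s => f s + g s) x = iteratedDeriv n f x + iteratedDeriv n g x := by
  simp only [← iteratedDerivWithin_univ]
  exact iteratedDerivWithin_add (Set.mem_univ x) uniqueDiffOn_univ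
    (hf.contDiffWithinAt.of_le (by exact_mod_cast le_top))
    (hg.contDiffWithinAt.of_le (by exact_mod_cast le_top))

private lemma iteratedDeriv_cmul' {f : ℝ → ℝ} (hf : ContDiff ℝ ∞ f) (c : ℝ)
    (n : ℕ) (x : ℝ) :
    iteratedDeriv n (fun s => c * f s) x = c * iteratedDeriv n f x := by
  simp only [← iteratedDerivWithin_univ]
  exact iteratedDerivWithin_const_mul (Set.mem_univ x) uniqueDiffOn_univ c
    (hf.contDiffWithinAt.of_le (by exact_mod_cast le_top))

private lemma leibnizID {f g : ℝ → ℝ} (hf : ContDiff ℝ ∞ f) (hg : ContDiff ℝ ∞ g) (n : ℕ) :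
    iteratedDeriv n (fun s => f s * g s) = fun x =>
      ∑ i ∈ range (n + 1),
        (n.choose i : ℝ) * iteratedDeriv i f x * iteratedDeriv (n - i) g x := by
  induction n with
  | zero => simp
  | succ n ih =>
    rw [iteratedDeriv_succ, ih]
    funext x
    have hdf : ∀ (m : ℕ) (y : ℝ), DifferentiableAt ℝ (iteratedDeriv m f) y := fun m y =>
      ((smoothID hf m).differentiable (by simp)).differentiableAt
    have hdg : ∀ (m : ℕ) (y : ℝ), DifferentiableAt ℝ (iteratedDeriv m g) y := fun m y =>
      ((smoothID hg m).differentiable (by simp)).differentiableAt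
    rw [deriv_fun_sum (fun i _ => by
      exact (((hdf i x).const_mul _).mul (hdg (n - i) x)))]
    have hterm : ∀ i ∈ range (n + 1),
        deriv (fun x => (n.choose i : ℝ) * iteratedDeriv i f x * iteratedDeriv (n - i) g x) x
          = (n.choose i : ℝ) * iteratedDeriv (i + 1) f x * iteratedDeriv (n - i) g x
            + (n.choose i : ℝ) * iteratedDeriv i f x * iteratedDeriv (n - i + 1) g x := by
      intro i _
      rw [deriv_fun_mul ((hdf i x).const_mul _) (hdg (n - i) x),
        deriv_const_mul _ (hdf i x), ← iteratedDeriv_succ, ← iteratedDeriv_succ]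
    rw [Finset.sum_congr rfl hterm, Finset.sum_add_distrib]
    -- now combine
    have e1 : ∀ i ∈ range (n + 1), (n.choose i : ℝ) * iteratedDeriv i f x
        * iteratedDeriv (n - i + 1) g x
        = (n.choose i : ℝ) * iteratedDeriv i f x * iteratedDeriv (n + 1 - i) g x := by
      intro i hi
      rw [mem_range] at hi
      congr 2
      omega
    rw [Finset.sum_congr rfl e1]
    rw [Finset.sum_range_succ' (fun i =>
      (((n+1).choose i : ℕ) : ℝ) * iteratedDeriv i f x * iteratedDeriv (n + 1 - i) g x) (n+1)]
    have e2 : ∀ i ∈ range (n + 1),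
        (((n+1).choose (i+1) : ℕ) : ℝ) * iteratedDeriv (i+1) f x
          * iteratedDeriv (n + 1 - (i+1)) g x
        = (n.choose i : ℝ) * iteratedDeriv (i+1) f x * iteratedDeriv (n - i) g x
          + (n.choose (i+1) : ℝ) * iteratedDeriv (i+1) f x * iteratedDeriv (n - i) g x := by
      intro i _
      rw [Nat.choose_succ_succ, Nat.succ_sub_succ]
      push_cast
      ring
    rw [Finset.sum_congr rfl e2, Finset.sum_add_distrib]
    have e3 : ∑ i ∈ range (n + 1),
        (n.choose (i+1) : ℝ) * iteratedDeriv (i+1) f x * iteratedDeriv (n - i) g x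
        = ∑ i ∈ range n,
        (n.choose (i+1) : ℝ) * iteratedDeriv (i+1) f x * iteratedDeriv (n - i) g x := by
      rw [Finset.sum_range_succ, Nat.choose_succ_self]
      simp
    have e4 : ∑ i ∈ range (n + 1),
        (n.choose i : ℝ) * iteratedDeriv i f x * iteratedDeriv (n + 1 - i) g x
        = ∑ i ∈ range n,
        (n.choose (i+1) : ℝ) * iteratedDeriv (i+1) f x * iteratedDeriv (n - i) g x
          + (n.choose 0 : ℝ) * iteratedDeriv 0 f x * iteratedDeriv (n + 1) g x := by
      rw [Finset.sum_range_succ' (fun i =>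
        (n.choose i : ℝ) * iteratedDeriv i f x * iteratedDeriv (n + 1 - i) g x) n]
      simp [Nat.succ_sub_succ]
    rw [e3, e4]
    simp [Nat.choose_zero_right]
    ring

private lemma iteratedDeriv_pow' (i : ℕ) : ∀ r : ℕ,
    iteratedDeriv r (fun s : ℝ => s ^ i) = fun s => (i.descFactorial r : ℝ) * s ^ (i - r) := by
  intro r
  induction r with
  | zero => simp
  | succ r ih =>
    rw [iteratedDeriv_succ, ih]
    funext s
    rw [deriv_const_mul _ (differentiableAt_pow _), deriv_pow_field]
    rw [Nat.descFactorial_succ, Nat.sub_sub]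
    push_cast
    ring

private lemma iteratedDeriv_pow_zero (i r : ℕ) :
    iteratedDeriv r (fun s : ℝ => s ^ i) 0 = if r = i then (i.factorial : ℝ) else 0 := by
  rw [iteratedDeriv_pow']
  rcases eq_or_ne r i with h | h
  · subst h
    simp [Nat.descFactorial_self]
  · rcases lt_or_gt_of_ne h with hlt | hgt
    · simp only [if_neg h]
      rw [zero_pow (by omega)]
      ring
    · rw [Nat.descFactorial_eq_zero_iff_lt.mpr hgt]
      simp [h]

private lemma iteratedDeriv_zero_fun (n : ℕ) :
    iteratedDeriv n (fun _ : ℝ => (0:ℝ)) = fun _ => 0 := by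
  induction n with
  | zero => simp
  | succ n ih => rw [iteratedDeriv_succ, ih]; simp

private lemma iteratedDeriv_finsum {ι : Type*} (t : Finset ι) (F : ι → ℝ → ℝ)
    (hF : ∀ i ∈ t, ContDiff ℝ ∞ (F i)) (n : ℕ) (x : ℝ) :
    iteratedDeriv n (fun s => ∑ i ∈ t, F i s) x = ∑ i ∈ t, iteratedDeriv n (F i) x := by
  induction t using Finset.cons_induction with
  | empty => simp [iteratedDeriv_zero_fun]
  | cons a t ha ih =>
    have h1 : ContDiff ℝ ∞ (F a) := hF a (Finset.mem_cons_self a t)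
    have h2 : ContDiff ℝ ∞ (fun s => ∑ i ∈ t, F i s) :=
      ContDiff.sum fun i hi => hF i (Finset.mem_cons_of_mem hi)
    have : (fun s => ∑ i ∈ Finset.cons a t ha, F i s)
        = (fun s => F a s + (fun u => ∑ i ∈ t, F i u) s) := by
      funext s; rw [Finset.sum_cons]
    rw [this, iteratedDeriv_add' h1 h2, ih (fun i hi => hF i (Finset.mem_cons_of_mem hi)),
      Finset.sum_cons]

private lemma expg_exists (m : ℕ) : ∃ g : ℝ → ℝ, ContDiff ℝ ∞ g ∧
    ∀ x : ℝ, Real.exp x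
      = (∑ i ∈ range (m + 1), x ^ i / i.factorial) + x ^ (m + 1) * g x := by
  classical
  set c : ℕ → ℝ := fun n => (((n + (m + 1)).factorial : ℝ))⁻¹ with hc
  set p := FormalMultilinearSeries.ofScalars ℝ c with hp
  have hcne : ∀ n, c n ≠ 0 := fun n => by
    simp [hc, Nat.factorial_ne_zero]
  have hrad : p.radius = ⊤ := by
    apply FormalMultilinearSeries.ofScalars_radius_eq_top_of_tendsto
    · exact Filter.Eventually.of_forall hcne
    · have : (fun n : ℕ => ‖c (n+1)‖ / ‖c n‖) = fun n : ℕ => (((n + (m+1) + 1) : ℝ))⁻¹ := by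
        funext n
        have h1 : (0:ℝ) < ((n + (m+1)).factorial : ℝ) := by
          exact_mod_cast Nat.factorial_pos _
        rw [hc]
        simp only [Real.norm_eq_abs]
        rw [abs_of_pos (by positivity), abs_of_pos (by positivity)]
        rw [show n + 1 + (m + 1) = (n + (m+1)) + 1 by omega, Nat.factorial_succ]
        push_cast
        field_simp
      rw [this]
      exact tendsto_inv_atTop_zero.comp (Filter.tendsto_atTop_add_const_right _ _
        (Filter.tendsto_atTop_add_const_right _ _ tendsto_natCast_atTop_atTop))
  have hball : HasFPowerSeriesOnBall p.sum p 0 ⊤ := by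
    rw [← hrad]
    exact p.hasFPowerSeriesOnBall (by rw [hrad]; exact ENNReal.zero_lt_top)
  refine ⟨p.sum, ?_, ?_⟩
  · rw [contDiff_iff_contDiffAt]
    intro x
    exact (hball.analyticAt_of_mem (by simp)).contDiffAt
  · intro x
    have hsum : p.sum x = ∑' n : ℕ, c n • x ^ n := by
      rw [hp]
      rw [show (FormalMultilinearSeries.ofScalars ℝ c).sum = FormalMultilinearSeries.ofScalarsSum c
        from rfl, FormalMultilinearSeries.ofScalarsSum_eq_tsum]
    rw [hsum]
    have hexp : Real.exp x = ∑' n : ℕ, x ^ n / (n.factorial : ℝ) := by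
      rw [Real.exp_eq_exp_ℝ, NormedSpace.exp_eq_tsum_div]
    have hsummable : Summable (fun n : ℕ => x ^ n / (n.factorial : ℝ)) :=
      Real.summable_pow_div_factorial x
    rw [hexp, ← Summable.sum_add_tsum_nat_add (m + 1) hsummable]
    congr 1
    rw [← tsum_mul_left]
    congr 1
    funext n
    rw [hc]
    simp only [smul_eq_mul]
    rw [pow_add]
    have : ((n + (m+1)).factorial : ℝ) ≠ 0 := by exact_mod_cast Nat.factorial_ne_zero _
    field_simp

private lemma keyExp (φ : ℝ → ℝ) (hφ : ContDiff ℝ ∞ φ) (m : ℕ) :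
    iteratedDeriv m (fun s : ℝ => Real.exp (s * φ s)) 0
      = ∑ j ∈ range (m + 1), (m.choose j : ℝ) * iteratedDeriv (m - j) (fun s => φ s ^ j) 0 := by
  obtain ⟨g, hg, hgexp⟩ := expg_exists m
  have hpow : ∀ i : ℕ, ContDiff ℝ ∞ (fun u : ℝ => u ^ i) := fun i => by
    exact contDiff_id.pow i
  have hsm : ∀ i : ℕ, ContDiff ℝ ∞ (fun u : ℝ => u ^ i * φ u ^ i) :=
    fun i => (hpow i).mul (hφ.pow i)
  set F : ℕ → ℝ → ℝ := fun i s => ((i.factorial : ℝ))⁻¹ * (s ^ i * φ s ^ i) with hF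
  set T : ℝ → ℝ := fun s => s ^ (m+1) * (φ s ^ (m+1) * g (s * φ s)) with hT
  have hFsm : ∀ i ∈ range (m+1), ContDiff ℝ ∞ (F i) := by
    intro i _
    exact contDiff_const.mul (hsm i)
  have hTin : ContDiff ℝ ∞ (fun u : ℝ => φ u ^ (m+1) * g (u * φ u)) :=
    (hφ.pow (m+1)).mul (hg.comp (contDiff_id.mul hφ))
  have hTsm : ContDiff ℝ ∞ T := (hpow (m+1)).mul hTin
  have hSsm : ContDiff ℝ ∞ (fun s : ℝ => ∑ i ∈ range (m+1), F i s) := ContDiff.sum hFsm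
  have hfun : (fun s : ℝ => Real.exp (s * φ s))
      = fun s => (fun u : ℝ => ∑ i ∈ range (m + 1), F i u) s + T s := by
    funext s
    rw [hgexp (s * φ s)]
    simp only [hF, hT]
    congr 1
    · exact Finset.sum_congr rfl fun i _ => by rw [mul_pow]; field_simp
    · rw [mul_pow]; ring
  rw [hfun, iteratedDeriv_add' hSsm hTsm, iteratedDeriv_finsum _ _ hFsm]
  -- tail vanishes
  have htail : iteratedDeriv m T 0 = 0 := by
    rw [hT, leibnizID (hpow (m+1)) hTin m]
    apply Finset.sum_eq_zero
    intro i hi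
    rw [mem_range] at hi
    rw [iteratedDeriv_pow_zero (m+1) i, if_neg (by omega)]
    ring
  rw [htail, add_zero]
  apply Finset.sum_congr rfl
  intro i hi
  rw [mem_range] at hi
  rw [hF]
  simp only
  rw [iteratedDeriv_cmul' (hsm i) _ m 0, leibnizID (hpow i) (hφ.pow i) m]
  simp only
  rw [Finset.sum_eq_single i]
  · rw [iteratedDeriv_pow_zero, if_pos rfl]
    have : ((i.factorial : ℝ)) ≠ 0 := by exact_mod_cast Nat.factorial_ne_zero i
    field_simp
  · intro b _ hbi
    rw [iteratedDeriv_pow_zero, if_neg hbi]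
    ring
  · intro h
    exact absurd (mem_range.mpr (by omega)) h

private lemma sum_swap_tri {M : Type*} [AddCommMonoid M] (n : ℕ) (f : ℕ → ℕ → M) :
    ∑ j ∈ range (n + 1), ∑ l ∈ range (n - j + 1), f j l
      = ∑ l ∈ range (n + 1), ∑ j ∈ range (n - l + 1), f j l := by
  rw [Finset.sum_sigma', Finset.sum_sigma']
  refine Finset.sum_nbij' (fun p => ⟨p.2, p.1⟩) (fun p => ⟨p.2, p.1⟩) ?_ ?_ ?_ ?_ ?_ <;>
    rintro ⟨a, b⟩ h <;> simp only [Finset.mem_sigma, Finset.mem_range] at h ⊢ <;>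
    first | rfl | omega

private lemma coef_eq {k j l : ℕ} (hl : l ≤ k) (hj : j ≤ k - l) :
    ((k.factorial : ℝ) /
        ((j.factorial : ℝ) * ((k - j - l).factorial) * (l.factorial)))
      = (k.choose l : ℝ) * ((k - l).choose j : ℝ) := by
  have h1 : k.choose l * l.factorial * (k - l).factorial = k.factorial :=
    Nat.choose_mul_factorial_mul_factorial hl
  have h2 : (k - l).choose j * j.factorial * (k - l - j).factorial = (k - l).factorial :=
    Nat.choose_mul_factorial_mul_factorial hj
  have hsub : k - j - l = k - l - j := by omega
  rw [hsub]
  rw [div_eq_iff (by positivity)]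
  rw [← h1, ← h2]
  push_cast
  ring

/-- For smooth `φ, ψ : ℝ → ℝ` and `k ≥ 1`,
`(d^k/ds^k (ψ(s)·exp(s·φ(s))))|₀
  = Σ_{j=0}^k Σ_{ℓ=0}^{k−j} (k!/(j!(k−j−ℓ)!ℓ!)) (d^{k−j−ℓ}/ds^{k−j−ℓ} φ(s)^j)|₀ (d^ℓ/ds^ℓ ψ)|₀`. -/
theorem stmt_19 (φ ψ : ℝ → ℝ) (hφ : ContDiff ℝ (⊤ : ℕ∞) φ) (hψ : ContDiff ℝ (⊤ : ℕ∞) ψ)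
    (k : ℕ) (hk : 1 ≤ k) :
    iteratedDeriv k (fun s : ℝ => ψ s * Real.exp (s * φ s)) 0
      = ∑ j ∈ Finset.range (k + 1), ∑ l ∈ Finset.range (k - j + 1),
          ((Nat.factorial k : ℝ) /
              ((Nat.factorial j : ℝ) * (Nat.factorial (k - j - l)) * (Nat.factorial l))) *
            iteratedDeriv (k - j - l) (fun s : ℝ => (φ s) ^ j) 0 *
            iteratedDeriv l ψ 0 := by
  have hφ' : ContDiff ℝ ∞ φ := hφ.of_le (by simp)
  have hψ' : ContDiff ℝ ∞ ψ := hψ.of_le (by simp)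
  have hE : ContDiff ℝ ∞ (fun s : ℝ => Real.exp (s * φ s)) :=
    Real.contDiff_exp.comp (contDiff_id.mul hφ')
  rw [show (fun s : ℝ => ψ s * Real.exp (s * φ s))
      = fun s : ℝ => ψ s * (fun u : ℝ => Real.exp (u * φ u)) s from rfl,
    leibnizID hψ' hE k]
  beta_reduce
  -- LHS is now a double sum; rewrite inner exp-derivatives with keyExp
  have step : ∀ l ∈ range (k + 1),
      (k.choose l : ℝ) * iteratedDeriv l ψ 0
          * iteratedDeriv (k - l) (fun u : ℝ => Real.exp (u * φ u)) 0
        = ∑ j ∈ range (k - l + 1),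
            (k.choose l : ℝ) * ((k - l).choose j : ℝ)
              * iteratedDeriv (k - l - j) (fun s => φ s ^ j) 0 * iteratedDeriv l ψ 0 := by
    intro l _
    rw [keyExp φ hφ' (k - l), Finset.mul_sum]
    apply Finset.sum_congr rfl
    intro j _
    ring
  rw [Finset.sum_congr rfl step]
  rw [sum_swap_tri k (fun j l => ((k.factorial : ℝ) /
      ((j.factorial : ℝ) * ((k - j - l).factorial) * (l.factorial))) *
      iteratedDeriv (k - j - l) (fun s : ℝ => φ s ^ j) 0 * iteratedDeriv l ψ 0)]
  apply Finset.sum_congr rfl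
  intro l hl
  apply Finset.sum_congr rfl
  intro j hj
  rw [mem_range] at hl hj
  rw [coef_eq (by omega) (by omega)]
  rw [show k - j - l = k - l - j by omega]
end
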